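/- arXiv:1904.06642 — 3 statements merged into one kernel-verified Lean document; each statement's English description precedes it below -/
import Mathlib

section
/- Let p and q be distinct primes, let G be an abelian group of order p^n q^m (n, m ≥ 1) with Sylow p-subgroup A and Sylow q-subgroup B, so G = A × B. Fix a proper subgroup chain Γ₁: A₁ < ⋯ < A_i = A of A with A₁ ≠ {e} and a proper subgroup chain Γ₂: B₁ < ⋯ < B_j = B of B with B₁ ≠ {e}. For each s with max{i,j} ≤ s ≤ i+j, the number of proper subgroup chains ending in G with nontrivial initial term and exactly s terms whose restriction to A is Γ₁ and whose restriction to B is Γ₂ equals C(s, i)·C(i, i+j−s). -/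
open scoped Classical

/-- A proper subgroup chain of `G` ending in `G`. -/
def ProperChain (G : Type*) [Group G] (l : List (Subgroup G)) : Prop :=
  l ≠ [] ∧ l.Chain' (· < ·) ∧ l.getLast? = some ⊤

/-- A proper subgroup chain ending in `G` whose initial term is nontrivial. -/
def HChain (G : Type*) [Group G] (l : List (Subgroup G)) : Prop :=
  ProperChain G l ∧ l.head? ≠ some (⊥ : Subgroup G)

/-- A proper subgroup chain of the subgroup `A` ending in `A` with nontrivial
initial term, realized as a strictly increasing list of subgroups of `G`
contained in `A`, with last term `A`. -/
def ChainIn {G : Type*} [Group G] (A : Subgroup G) (l : List (Subgroup G)) : Prop :=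
  l ≠ [] ∧ l.Chain' (· < ·) ∧ l.getLast? = some A ∧
    l.head? ≠ some (⊥ : Subgroup G) ∧ ∀ H ∈ l, H ≤ A

/-- The restriction of a subgroup chain to a subgroup `A`: intersect every term
with `A`, delete repeated (adjacent equal) terms, and delete the trivial subgroup. -/
noncomputable def restrictChain {G : Type*} [Group G] (A : Subgroup G)
    (l : List (Subgroup G)) : List (Subgroup G) :=
  ((l.map (fun H => H ⊓ A)).destutter (· ≠ ·)).filter (fun H => decide (H ≠ ⊥))

set_option linter.unusedSectionVars false
set_option linter.unusedVariables false
set_option maxHeartbeats 1000000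

section GroupPart

variable {G : Type*} [CommGroup G] [Finite G]

lemma mem_of_orderOf_dvd {p q n m : ℕ} (hp : p.Prime) (hq : q.Prime) (hpq : p ≠ q)
    (hG : Nat.card G = p ^ n * q ^ m) (B : Subgroup G) (hB : Nat.card B = q ^ m)
    {g : G} (hg : orderOf g ∣ q ^ m) : g ∈ B := by
  haveI := Fact.mk hq
  have h1 : IsPGroup q B := IsPGroup.of_card hB
  obtain ⟨t, _, hgt⟩ := (Nat.dvd_prime_pow hq).mp hg
  have h2 : IsPGroup q (Subgroup.zpowers g) :=
    IsPGroup.of_card (n := t) (by rw [Nat.card_zpowers, hgt])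
  have h3 : IsPGroup q ↥(B ⊔ Subgroup.zpowers g) := IsPGroup.to_sup_of_normal_right h1 h2
  obtain ⟨k, hk⟩ := h3.exists_card_eq
  have hdvd : Nat.card ↥(B ⊔ Subgroup.zpowers g) ∣ Nat.card G :=
    Subgroup.card_subgroup_dvd_card _
  rw [hk, hG] at hdvd
  have hco : Nat.Coprime (q ^ k) (p ^ n) :=
    Nat.Coprime.pow _ _ ((Nat.coprime_primes hq hp).mpr hpq.symm)
  have hqk : q ^ k ∣ q ^ m := hco.dvd_of_dvd_mul_left hdvd
  have hle : Nat.card ↥(B ⊔ Subgroup.zpowers g) ≤ Nat.card B := by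
    rw [hB, hk]
    exact Nat.le_of_dvd (pow_pos hq.pos m) hqk
  have heq : B = B ⊔ Subgroup.zpowers g := Subgroup.eq_of_le_of_card_ge le_sup_left hle
  have : g ∈ B ⊔ Subgroup.zpowers g := Subgroup.mem_sup_right (Subgroup.mem_zpowers g)
  rwa [← heq] at this

lemma decomp {p q n m : ℕ} (hp : p.Prime) (hq : q.Prime) (hpq : p ≠ q)
    (hG : Nat.card G = p ^ n * q ^ m) (A B : Subgroup G)
    (hA : Nat.card A = p ^ n) (hB : Nat.card B = q ^ m) (H : Subgroup G) :
    H = (H ⊓ A) ⊔ (H ⊓ B) := by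
  refine le_antisymm ?_ (sup_le inf_le_left inf_le_left)
  intro h hh
  have hxB : h ^ p ^ n ∈ B := by
    refine mem_of_orderOf_dvd hp hq hpq hG B hB ?_
    rw [orderOf_dvd_iff_pow_eq_one, ← pow_mul, ← hG]
    exact pow_card_eq_one'
  have hyA : h ^ q ^ m ∈ A := by
    refine mem_of_orderOf_dvd hq hp hpq.symm (by rw [hG, mul_comm]) A hA ?_
    rw [orderOf_dvd_iff_pow_eq_one, ← pow_mul, mul_comm, ← hG]
    exact pow_card_eq_one'
  have hco : Nat.Coprime (p ^ n) (q ^ m) :=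
    Nat.Coprime.pow _ _ ((Nat.coprime_primes hp hq).mpr hpq)
  have hb := Nat.gcd_eq_gcd_ab (p ^ n) (q ^ m)
  rw [Nat.Coprime.gcd_eq_one hco, Nat.cast_one] at hb
  have hrep : h = (h ^ p ^ n) ^ (p ^ n : ℕ).gcdA (q ^ m) *
      (h ^ q ^ m) ^ (p ^ n : ℕ).gcdB (q ^ m) := by
    rw [← zpow_natCast h (p ^ n), ← zpow_natCast h (q ^ m), ← zpow_mul, ← zpow_mul,
      ← zpow_add]
    nth_rewrite 1 [← zpow_one h]
    rw [hb]
  rw [hrep]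
  exact mul_mem
    (Subgroup.mem_sup_right ((H ⊓ B).zpow_mem (Subgroup.mem_inf.mpr ⟨H.pow_mem hh _, hxB⟩) _))
    (Subgroup.mem_sup_left ((H ⊓ A).zpow_mem (Subgroup.mem_inf.mpr ⟨H.pow_mem hh _, hyA⟩) _))

omit [Finite G] in
lemma inf_AB_bot {p q n m : ℕ} (hp : p.Prime) (hq : q.Prime) (hpq : p ≠ q)
    (A B : Subgroup G) (hA : Nat.card A = p ^ n) (hB : Nat.card B = q ^ m) :
    A ⊓ B = ⊥ := by
  have h1 : Nat.card ↥(A ⊓ B) ∣ p ^ n := hA ▸ Subgroup.card_dvd_of_le inf_le_left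
  have h2 : Nat.card ↥(A ⊓ B) ∣ q ^ m := hB ▸ Subgroup.card_dvd_of_le inf_le_right
  have hco : Nat.Coprime (p ^ n) (q ^ m) :=
    Nat.Coprime.pow _ _ ((Nat.coprime_primes hp hq).mpr hpq)
  have : Nat.card ↥(A ⊓ B) = 1 := Nat.eq_one_of_dvd_coprimes hco h1 h2
  exact Subgroup.card_eq_one.mp this

omit [Finite G] in
lemma sup_inf_eq_left {A B a b : Subgroup G} (hbot : A ⊓ B = ⊥)
    (ha : a ≤ A) (hb : b ≤ B) : (a ⊔ b) ⊓ A = a := by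
  refine le_antisymm ?_ (le_inf le_sup_left ha)
  intro x hx
  obtain ⟨hx1, hx2⟩ := Subgroup.mem_inf.mp hx
  obtain ⟨y, hy, z, hz, hyz⟩ := Subgroup.mem_sup.mp hx1
  have hzA : z ∈ A := by
    have : z = y⁻¹ * x := by rw [← hyz]; group
    rw [this]
    exact A.mul_mem (A.inv_mem (ha hy)) hx2
  have : z ∈ A ⊓ B := Subgroup.mem_inf.mpr ⟨hzA, hb hz⟩
  rw [hbot, Subgroup.mem_bot] at this
  rw [← hyz, this, mul_one]
  exact hy

end GroupPart

section ListPart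

variable {α : Type*}

lemma destutter'_of_chain_le [PartialOrder α] [DecidableRel ((· ≠ ·) : α → α → Prop)] :
    ∀ (l : List α) (a : α), List.Chain' (· ≤ ·) (a :: l) →
      List.Chain' (· < ·) (List.destutter' (· ≠ ·) a l) ∧
      (List.destutter' (· ≠ ·) a l).toFinset = (a :: l).toFinset ∧
      (List.destutter' (· ≠ ·) a l).head? = some a
  | [], a, _ => by simp [List.destutter'_nil, List.Chain']
  | b :: t, a, h => by
    have hab : a ≤ b := (List.isChain_cons_cons.mp h).1
    have hbt : List.Chain' (· ≤ ·) (b :: t) := (List.isChain_cons_cons.mp h).2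
    by_cases hne : a ≠ b
    · rw [List.destutter'_cons_pos _ hne]
      obtain ⟨h1, h2, h3⟩ := destutter'_of_chain_le t b hbt
      refine ⟨List.isChain_cons.mpr ⟨?_, h1⟩, ?_, rfl⟩
      · intro y hy
        rw [h3, Option.mem_def, Option.some_inj] at hy
        rw [← hy]
        exact lt_of_le_of_ne hab hne
      · rw [List.toFinset_cons, h2]
        simp
    · push_neg at hne
      subst hne
      rw [List.destutter'_cons_neg _ (by simp)]
      have hat : List.Chain' (· ≤ ·) (a :: t) := by
        rcases t with _ | ⟨c, t'⟩
        · simp [List.Chain']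
        · exact List.isChain_cons_cons.mpr ⟨le_trans hab (List.isChain_cons_cons.mp hbt).1,
            (List.isChain_cons_cons.mp hbt).2⟩
      obtain ⟨h1, h2, h3⟩ := destutter'_of_chain_le t a hat
      refine ⟨h1, ?_, h3⟩
      rw [h2]
      simp

lemma destutter_of_chain_le [PartialOrder α] [DecidableRel ((· ≠ ·) : α → α → Prop)]
    (l : List α) (h : List.Chain' (· ≤ ·) l) :
    List.Chain' (· < ·) (List.destutter (· ≠ ·) l) ∧
      (List.destutter (· ≠ ·) l).toFinset = l.toFinset := by
  rcases l with _ | ⟨a, t⟩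
  · simp [List.Chain']
  · rw [List.destutter_cons']
    exact ⟨(destutter'_of_chain_le t a h).1, (destutter'_of_chain_le t a h).2.1⟩

lemma eq_of_chain_lt_toFinset [PartialOrder α] [DecidableEq α] {l l' : List α}
    (h : List.Chain' (· < ·) l) (h' : List.Chain' (· < ·) l')
    (ht : l.toFinset = l'.toFinset) : l = l' := by
  have hs : List.Pairwise (· < ·) l := List.isChain_iff_pairwise.mp h
  have hs' : List.Pairwise (· < ·) l' := List.isChain_iff_pairwise.mp h'
  exact List.Perm.eq_of_pairwise (fun a b _ _ h1 h2 => absurd (h1.trans h2) (lt_irrefl _)) hs hs'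
    (List.perm_of_nodup_nodup_toFinset_eq hs.nodup hs'.nodup ht)

lemma exists_eq_of_steps (N : ℕ → ℕ) (hmono : Monotone N)
    (hstep : ∀ t, N (t + 1) ≤ N t + 1) :
    ∀ (T k : ℕ), N 0 ≤ k → k ≤ N T → ∃ t ≤ T, N t = k := by
  intro T
  induction T with
  | zero => exact fun k h0 hT => ⟨0, le_refl 0, le_antisymm h0 hT⟩
  | succ T ih =>
    intro k h0 hT
    by_cases h : k ≤ N T
    · obtain ⟨t, ht, he⟩ := ih k h0 h
      exact ⟨t, le_trans ht (Nat.le_succ T), he⟩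
    · push_neg at h
      refine ⟨T + 1, le_refl _, le_antisymm ?_ hT⟩
      exact le_trans (hstep T) (by omega)

end ListPart

def cntF {s : ℕ} (S : Finset (Fin s)) (t : ℕ) : ℕ :=
  (S.filter (fun x : Fin s => x.val ≤ t)).card

section CntPart

variable {s : ℕ} (S : Finset (Fin s))

lemma cntF_mono {t t' : ℕ} (h : t ≤ t') : cntF S t ≤ cntF S t' := by
  apply Finset.card_le_card
  intro x hx
  rw [Finset.mem_filter] at hx ⊢
  exact ⟨hx.1, le_trans hx.2 h⟩

lemma cntF_le (t : ℕ) : cntF S t ≤ S.card := Finset.card_filter_le _ _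

lemma cntF_eq_card {t : ℕ} (h : s - 1 ≤ t) : cntF S t = S.card := by
  unfold cntF
  rw [Finset.filter_true_of_mem]
  intro x hx
  have := x.2
  omega

lemma cntF_zero (hs : 0 < s) :
    cntF S 0 = if (⟨0, hs⟩ : Fin s) ∈ S then 1 else 0 := by
  unfold cntF
  have he : S.filter (fun x : Fin s => x.val ≤ 0)
      = S.filter (fun x : Fin s => x = ⟨0, hs⟩) := by
    apply Finset.filter_congr
    intro x _
    simp only [Fin.ext_iff]
    omega
  rw [he, Finset.filter_eq']
  by_cases hmem : (⟨0, hs⟩ : Fin s) ∈ S <;> simp [hmem]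

lemma cntF_succ {t : ℕ} (h : t + 1 < s) :
    cntF S (t + 1) = cntF S t + if (⟨t + 1, h⟩ : Fin s) ∈ S then 1 else 0 := by
  unfold cntF
  have he : S.filter (fun x : Fin s => x.val ≤ t + 1)
      = S.filter (fun x : Fin s => x.val ≤ t ∨ x = ⟨t + 1, h⟩) := by
    apply Finset.filter_congr
    intro x _
    simp only [Fin.ext_iff]
    omega
  rw [he, Finset.filter_or, Finset.card_union_of_disjoint, Finset.filter_eq']
  · by_cases hmem : (⟨t + 1, h⟩ : Fin s) ∈ S <;> simp [hmem]
  · rw [Finset.disjoint_left]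
    intro x hx1 hx2
    rw [Finset.mem_filter] at hx1 hx2
    have h3 : x.val = t + 1 := by rw [hx2.2]
    have h4 : x.val ≤ t := hx1.2
    omega

lemma cntF_succ_le (t : ℕ) : cntF S (t + 1) ≤ cntF S t + 1 := by
  by_cases h : t + 1 < s
  · rw [cntF_succ S h]
    split <;> omega
  · have heq : cntF S (t + 1) = cntF S t := by
      unfold cntF
      congr 1
      apply Finset.filter_congr
      intro x _
      have := x.2
      omega
    omega

lemma cntF_mem_iff {t : Fin s} :
    t ∈ S ↔ (if t.val = 0 then 0 else cntF S (t.val - 1)) < cntF S t.val := by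
  rcases t with ⟨tv, htv⟩
  rcases tv with _ | u
  · simp only [if_pos rfl]
    rw [cntF_zero S htv]
    by_cases hmem : (⟨0, htv⟩ : Fin s) ∈ S <;> simp [hmem]
  · simp only [Nat.succ_sub_one, if_neg (Nat.succ_ne_zero u)]
    rw [cntF_succ S htv]
    by_cases hmem : (⟨u + 1, htv⟩ : Fin s) ∈ S <;> simp [hmem]

end CntPart

def elF {G : Type*} [Group G] (A : Subgroup G) (L : List (Subgroup G)) (k : ℕ) : Subgroup G :=
  (⊥ :: L).getD k A

section ElPart

variable {G : Type*} [Group G] {A : Subgroup G} {L : List (Subgroup G)}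

lemma chainIn_sorted (hL : ChainIn A L) : List.Pairwise (· < ·) (⊥ :: L) := by
  have h : List.Chain' (· < ·) (⊥ :: L) := by
    refine List.isChain_cons.mpr ⟨?_, hL.2.1⟩
    intro y hy
    rw [Option.mem_def] at hy
    have hne : y ≠ ⊥ := by
      intro h
      apply hL.2.2.2.1
      rw [hy, h]
    exact bot_lt_iff_ne_bot.mpr hne
  exact List.isChain_iff_pairwise.mp h

lemma chainIn_length_pos (hL : ChainIn A L) : 0 < L.length :=
  List.length_pos_iff.mpr hL.1

lemma elF_eq_get {k : ℕ} (hk : k < L.length + 1) :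
    elF A L k = (⊥ :: L).get ⟨k, by simpa using hk⟩ := by
  rw [elF, List.getD_eq_getElem _ _ (by simpa using hk)]
  simp

lemma elF_zero : elF A L 0 = ⊥ := rfl

lemma elF_last (hL : ChainIn A L) : elF A L L.length = A := by
  have h1 : L ≠ [] := hL.1
  have h2 : (⊥ :: L) ≠ [] := List.cons_ne_nil _ _
  have h3 := List.getLast_eq_getElem h2
  rw [List.getLast_cons h1] at h3
  simp only [List.length_cons, Nat.add_sub_cancel] at h3
  have h4 : L.getLast h1 = A := by
    rw [← Option.some_inj, ← List.getLast?_eq_getLast h1]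
    exact hL.2.2.1
  rw [elF, List.getD_eq_getElem _ _ (by simp), ← h3, h4]

lemma elF_lt (hL : ChainIn A L) {k k' : ℕ} (hk : k < k') (hk' : k' ≤ L.length) :
    elF A L k < elF A L k' := by
  rw [elF_eq_get (by omega), elF_eq_get (by omega)]
  exact (chainIn_sorted hL).sortedLT.strictMono_get (by simpa using hk)

lemma elF_mono (hL : ChainIn A L) {k k' : ℕ} (hk : k ≤ k') (hk' : k' ≤ L.length) :
    elF A L k ≤ elF A L k' := by
  rcases Nat.lt_or_ge k k' with h | h
  · exact le_of_lt (elF_lt hL h hk')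
  · have : k = k' := by omega
    rw [this]

lemma elF_inj (hL : ChainIn A L) {k k' : ℕ} (hk : k ≤ L.length) (hk' : k' ≤ L.length)
    (h : elF A L k = elF A L k') : k = k' := by
  rcases Nat.lt_trichotomy k k' with hc | hc | hc
  · exact absurd h (ne_of_lt (elF_lt hL hc hk'))
  · exact hc
  · exact absurd h.symm (ne_of_lt (elF_lt hL hc hk))

lemma elF_mem (hL : ChainIn A L) {k : ℕ} (h1 : 1 ≤ k) (h2 : k ≤ L.length) :
    elF A L k ∈ L := by
  obtain ⟨k', rfl⟩ : ∃ k', k = k' + 1 := ⟨k - 1, by omega⟩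
  rw [elF, List.getD_eq_getElem _ _ (by simp; omega), List.getElem_cons_succ]
  exact List.getElem_mem _

lemma elF_ne_bot (hL : ChainIn A L) {k : ℕ} (h1 : 1 ≤ k) (h2 : k ≤ L.length) :
    elF A L k ≠ ⊥ := by
  have h := elF_lt hL (show 0 < k by omega) h2
  rw [elF_zero] at h
  exact fun hc => absurd (hc ▸ h) (lt_irrefl _)

lemma elF_le (hL : ChainIn A L) (k : ℕ) : elF A L k ≤ A := by
  rcases Nat.eq_zero_or_pos k with h | h
  · rw [h, elF_zero]; exact bot_le
  · rcases Nat.lt_or_ge L.length k with h2 | h2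
    · rw [elF, List.getD_eq_default _ _ (by simp; omega)]
    · exact hL.2.2.2.2 _ (elF_mem hL h h2)

lemma mem_iff_elF (hL : ChainIn A L) {x : Subgroup G} (hx : x ∈ L) :
    ∃ k, 1 ≤ k ∧ k ≤ L.length ∧ elF A L k = x := by
  obtain ⟨v, hv, he⟩ := List.mem_iff_getElem.mp hx
  refine ⟨v + 1, by omega, by omega, ?_⟩
  rw [elF, List.getD_eq_getElem _ _ (by simp; omega), List.getElem_cons_succ]
  exact he

lemma core_restrict (hL : ChainIn A L) {s : ℕ} (hs : 0 < s) (S : Finset (Fin s))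
    (hS : S.card = L.length) :
    ((List.ofFn (fun t : Fin s => elF A L (cntF S t.val))).destutter (· ≠ ·)).filter
      (fun H => decide (H ≠ ⊥)) = L := by
  have hchain : (List.ofFn (fun t : Fin s => elF A L (cntF S t.val))).Chain' (· ≤ ·) := by
    show List.IsChain _ _
    rw [List.isChain_ofFn]
    intro u hu
    exact elF_mono hL (cntF_mono S (Nat.le_succ u)) (hS ▸ cntF_le S (u + 1))
  obtain ⟨hdchain, hdfin⟩ := destutter_of_chain_le _ hchain
  have hfil : List.Chain' (· < ·)
      (((List.ofFn (fun t : Fin s => elF A L (cntF S t.val))).destutter (· ≠ ·)).filter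
        (fun H => decide (H ≠ ⊥))) :=
    List.IsChain.sublist hdchain List.filter_sublist
  apply eq_of_chain_lt_toFinset hfil hL.2.1
  ext x
  rw [List.mem_toFinset, List.mem_toFinset, List.mem_filter]
  have hmemd : x ∈ (List.ofFn (fun t : Fin s => elF A L (cntF S t.val))).destutter (· ≠ ·)
      ↔ ∃ t : Fin s, elF A L (cntF S t.val) = x := by
    rw [← List.mem_toFinset, hdfin, List.mem_toFinset, List.mem_ofFn]
  constructor
  · rintro ⟨hx1, hx2⟩
    rw [decide_eq_true_iff] at hx2
    obtain ⟨t, ht⟩ := hmemd.mp hx1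
    have hk1 : 1 ≤ cntF S t.val := by
      rcases Nat.eq_zero_or_pos (cntF S t.val) with h | h
      · rw [h, elF_zero] at ht
        exact absurd ht.symm hx2
      · exact h
    have hk2 : cntF S t.val ≤ L.length := hS ▸ cntF_le S t.val
    rw [← ht]
    exact elF_mem hL hk1 hk2
  · intro hx
    obtain ⟨k, hk1, hk2, hke⟩ := mem_iff_elF hL hx
    have h0 : cntF S 0 ≤ 1 := by
      rw [cntF_zero S hs]
      split <;> omega
    obtain ⟨t, ht1, ht2⟩ := exists_eq_of_steps (cntF S)
      (fun u v huv => cntF_mono S huv) (cntF_succ_le S) (s - 1) k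
      (by omega) (by rw [cntF_eq_card S le_rfl, hS]; omega)
    refine ⟨hmemd.mpr ⟨⟨t, by omega⟩, ?_⟩, ?_⟩
    · rw [ht2]; exact hke
    · rw [decide_eq_true_iff, ← hke]
      exact elF_ne_bot hL hk1 hk2

lemma analyze_side (hL : ChainIn A L) {s : ℕ} (hs : 0 < s) (a : Fin s → Subgroup G)
    (hmono : Monotone a)
    (hlast : a ⟨s - 1, by omega⟩ = A)
    (hres : ((List.ofFn a).destutter (· ≠ ·)).filter (fun H => decide (H ≠ ⊥)) = L) :
    ∃ S : Finset (Fin s), S.card = L.length ∧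
      ∀ t : Fin s, a t = elF A L (cntF S t.val) := by
  have hchain : (List.ofFn a).Chain' (· ≤ ·) := by
    show List.IsChain _ _
    rw [List.isChain_ofFn]
    intro u hu
    exact hmono (Nat.le_succ u)
  obtain ⟨hdchain, hdfin⟩ := destutter_of_chain_le _ hchain
  have hmemd : ∀ x, x ∈ (List.ofFn a).destutter (· ≠ ·) ↔ ∃ t : Fin s, a t = x := by
    intro x
    rw [← List.mem_toFinset, hdfin, List.mem_toFinset, List.mem_ofFn]
  have hmem2 : ∀ t : Fin s, a t ≠ ⊥ → a t ∈ L := by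
    intro t ht
    rw [← hres, List.mem_filter]
    exact ⟨(hmemd _).mpr ⟨t, rfl⟩, decide_eq_true_iff.mpr ht⟩
  have hmem1 : ∀ x ∈ L, ∃ t : Fin s, a t = x := by
    intro x hx
    rw [← hres, List.mem_filter] at hx
    exact (hmemd _).mp hx.1
  have hC := chainIn_sorted hL
  have hCnd : (⊥ :: L).Nodup := hC.nodup
  have hmemC : ∀ t : Fin s, a t ∈ (⊥ :: L) := by
    intro t
    by_cases h : a t = ⊥
    · rw [h]; exact List.mem_cons_self
    · exact List.mem_cons_of_mem _ (hmem2 t h)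
  have hidxlt : ∀ t : Fin s, (⊥ :: L).idxOf (a t) < (⊥ :: L).length :=
    fun t => List.idxOf_lt_length_iff.mpr (hmemC t)
  have hidxle : ∀ t : Fin s, (⊥ :: L).idxOf (a t) ≤ L.length := by
    intro t
    have := hidxlt t
    simp at this
    omega
  have hgetidx : ∀ t : Fin s, elF A L ((⊥ :: L).idxOf (a t)) = a t := by
    intro t
    rw [elF_eq_get (by have := hidxle t; omega)]
    exact List.idxOf_get (hidxlt t)
  have hidxmono : ∀ t t' : Fin s, t ≤ t' →
      (⊥ :: L).idxOf (a t) ≤ (⊥ :: L).idxOf (a t') := by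
    intro t t' h
    by_contra hlt
    push_neg at hlt
    have hlt2 : a t' < a t := by
      have := hC.sortedLT.strictMono_get
        (show (⟨(⊥ :: L).idxOf (a t'), hidxlt t'⟩ : Fin (⊥ :: L).length)
          < ⟨(⊥ :: L).idxOf (a t), hidxlt t⟩ from hlt)
      rwa [List.idxOf_get, List.idxOf_get] at this
    exact absurd (lt_of_lt_of_le hlt2 (hmono h)) (lt_irrefl _)
  let K : ℕ → ℕ := fun u => (⊥ :: L).idxOf (a ⟨min u (s - 1), by omega⟩)
  have hKt : ∀ t : Fin s, K t.val = (⊥ :: L).idxOf (a t) := by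
    intro t
    have hm : min t.val (s - 1) = t.val := by have := t.2; omega
    simp only [K, hm]
  have hKmono : Monotone K := by
    intro u v huv
    exact hidxmono _ _ (by simp [Fin.le_def]; omega)
  have hattain : ∀ v, 1 ≤ v → v ≤ L.length → ∃ t : Fin s, (⊥ :: L).idxOf (a t) = v := by
    intro v h1 h2
    obtain ⟨t, ht⟩ := hmem1 _ (elF_mem hL h1 h2)
    refine ⟨t, ?_⟩
    rw [ht, elF_eq_get (by omega)]
    have := List.get_idxOf hCnd ⟨v, by simp; omega⟩
    simpa using this
  have hlenpos : 1 ≤ L.length := chainIn_length_pos hL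
  have hK0 : K 0 ≤ 1 := by
    by_contra h
    push_neg at h
    obtain ⟨t, ht⟩ := hattain 1 le_rfl hlenpos
    have h2 : K 0 ≤ K t.val := hKmono (Nat.zero_le _)
    rw [hKt t, ht] at h2
    omega
  have hKle : ∀ u, K u ≤ L.length := by
    intro u
    exact hidxle ⟨min u (s - 1), by omega⟩
  have hKstep : ∀ u, K (u + 1) ≤ K u + 1 := by
    intro u
    by_contra h
    push_neg at h
    have hv2 : K u + 1 ≤ L.length := by have := hKle (u + 1); omega
    obtain ⟨t, ht⟩ := hattain (K u + 1) (by omega) hv2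
    have h1 := hKt t
    rcases le_or_gt t.val u with hc | hc
    · have : K t.val ≤ K u := hKmono hc
      omega
    · have : K (u + 1) ≤ K t.val := hKmono hc
      omega
  set S : Finset (Fin s) := Finset.univ.filter
    (fun t : Fin s => (if t.val = 0 then 0 else K (t.val - 1)) < K t.val) with hSdef
  have hmemS : ∀ t : Fin s, t ∈ S ↔ (if t.val = 0 then 0 else K (t.val - 1)) < K t.val := by
    intro t
    rw [hSdef, Finset.mem_filter]
    simp
  have hcnt : ∀ u, u < s → cntF S u = K u := by
    intro u
    induction u with
    | zero =>
      intro hu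
      rw [cntF_zero S hs]
      have hm := hmemS ⟨0, hs⟩
      simp only [if_pos rfl] at hm
      by_cases h : 0 < K 0
      · rw [if_pos (hm.mpr h)]; omega
      · rw [if_neg (fun hc => h (hm.mp hc))]; omega
    | succ u ih =>
      intro hu
      have hu' : u < s := by omega
      rw [cntF_succ S hu, ih hu']
      have hm := hmemS ⟨u + 1, hu⟩
      simp only [Nat.succ_sub_one, if_neg (Nat.succ_ne_zero u)] at hm
      by_cases h : K u < K (u + 1)
      · rw [if_pos (hm.mpr h)]
        have := hKstep u
        omega
      · rw [if_neg (fun hc => h (hm.mp hc))]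
        have : K u ≤ K (u + 1) := hKmono (by omega)
        omega
  have hKlast : K (s - 1) = L.length := by
    have h1 := hKt ⟨s - 1, by omega⟩
    rw [hlast] at h1
    rw [h1]
    have h2 : elF A L L.length = A := elF_last hL
    rw [← h2, elF_eq_get (by omega)]
    have := List.get_idxOf hCnd ⟨L.length, by simp⟩
    simpa using this
  refine ⟨S, ?_, ?_⟩
  · rw [← cntF_eq_card S (le_refl (s - 1)), hcnt (s - 1) (by omega), hKlast]
  · intro t
    rw [hcnt t.val t.2, hKt t, hgetidx t]
end ElPart

noncomputable def PhiF {G : Type*} [Group G] (A B : Subgroup G)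
    (L1 L2 : List (Subgroup G)) {s : ℕ} (ST : Finset (Fin s) × Finset (Fin s)) :
    List (Subgroup G) :=
  List.ofFn (fun t : Fin s => elF A L1 (cntF ST.1 t.val) ⊔ elF B L2 (cntF ST.2 t.val))

section PhiPart

variable {G : Type*} [CommGroup G] {A B : Subgroup G} {L1 L2 : List (Subgroup G)} {s : ℕ}

lemma PhiF_length (ST : Finset (Fin s) × Finset (Fin s)) :
    (PhiF A B L1 L2 ST).length = s := by
  unfold PhiF; rw [List.length_ofFn]

lemma PhiF_getElem (ST : Finset (Fin s) × Finset (Fin s)) (u : ℕ) (hu : u < s)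
    (h' : u < (PhiF A B L1 L2 ST).length) :
    (PhiF A B L1 L2 ST)[u] = elF A L1 (cntF ST.1 u) ⊔ elF B L2 (cntF ST.2 u) := by
  exact List.getElem_ofFn h'

lemma phi_mem (h₁ : ChainIn A L1) (h₂ : ChainIn B L2)
    (hbot : A ⊓ B = ⊥) (hbot' : B ⊓ A = ⊥) (htop : A ⊔ B = ⊤)
    (hs : 0 < s) {ST : Finset (Fin s) × Finset (Fin s)}
    (hScard : ST.1.card = L1.length) (hTcard : ST.2.card = L2.length)
    (hunion : ST.1 ∪ ST.2 = Finset.univ) :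
    HChain G (PhiF A B L1 L2 ST) ∧ (PhiF A B L1 L2 ST).length = s ∧
      restrictChain A (PhiF A B L1 L2 ST) = L1 ∧
      restrictChain B (PhiF A B L1 L2 ST) = L2 := by
  have hvA : ∀ u : ℕ, (elF A L1 (cntF ST.1 u) ⊔ elF B L2 (cntF ST.2 u)) ⊓ A
      = elF A L1 (cntF ST.1 u) :=
    fun u => sup_inf_eq_left hbot (elF_le h₁ _) (elF_le h₂ _)
  have hvB : ∀ u : ℕ, (elF A L1 (cntF ST.1 u) ⊔ elF B L2 (cntF ST.2 u)) ⊓ B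
      = elF B L2 (cntF ST.2 u) := by
    intro u
    rw [sup_comm]
    exact sup_inf_eq_left hbot' (elF_le h₂ _) (elF_le h₁ _)
  have hchain : (PhiF A B L1 L2 ST).Chain' (· < ·) := by
    show List.IsChain _ _
    rw [List.isChain_iff_getElem]
    intro u hu
    rw [PhiF_length] at hu
    rw [PhiF_getElem ST u (by omega),
      PhiF_getElem ST (u + 1) (by omega)]
    have hAle : elF A L1 (cntF ST.1 u) ≤ elF A L1 (cntF ST.1 (u + 1)) :=
      elF_mono h₁ (cntF_mono ST.1 (Nat.le_succ u)) (hScard ▸ cntF_le ST.1 (u + 1))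
    have hBle : elF B L2 (cntF ST.2 u) ≤ elF B L2 (cntF ST.2 (u + 1)) :=
      elF_mono h₂ (cntF_mono ST.2 (Nat.le_succ u)) (hTcard ▸ cntF_le ST.2 (u + 1))
    have hmem : (⟨u + 1, by omega⟩ : Fin s) ∈ ST.1 ∪ ST.2 := by
      rw [hunion]; exact Finset.mem_univ _
    have hne : elF A L1 (cntF ST.1 u) ⊔ elF B L2 (cntF ST.2 u)
        ≠ elF A L1 (cntF ST.1 (u + 1)) ⊔ elF B L2 (cntF ST.2 (u + 1)) := by
      rcases Finset.mem_union.mp hmem with hm | hm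
      · have hj := (cntF_mem_iff ST.1).mp hm
        rw [if_neg (Nat.succ_ne_zero u)] at hj
        simp only [Nat.add_sub_cancel] at hj
        have hlt : elF A L1 (cntF ST.1 u) < elF A L1 (cntF ST.1 (u + 1)) :=
          elF_lt h₁ hj (hScard ▸ cntF_le ST.1 (u + 1))
        intro hc
        have := congrArg (fun x => x ⊓ A) hc
        rw [hvA u, hvA (u + 1)] at this
        exact absurd this (ne_of_lt hlt)
      · have hj := (cntF_mem_iff ST.2).mp hm
        rw [if_neg (Nat.succ_ne_zero u)] at hj
        simp only [Nat.add_sub_cancel] at hj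
        have hlt : elF B L2 (cntF ST.2 u) < elF B L2 (cntF ST.2 (u + 1)) :=
          elF_lt h₂ hj (hTcard ▸ cntF_le ST.2 (u + 1))
        intro hc
        have := congrArg (fun x => x ⊓ B) hc
        rw [hvB u, hvB (u + 1)] at this
        exact absurd this (ne_of_lt hlt)
    exact lt_of_le_of_ne (sup_le_sup hAle hBle) hne
  have hlen : (PhiF A B L1 L2 ST).length = s := PhiF_length ST
  have hne_nil : PhiF A B L1 L2 ST ≠ [] := by
    intro hc
    rw [hc] at hlen
    simp at hlen
    omega
  have hlast : (PhiF A B L1 L2 ST).getLast? = some ⊤ := by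
    rw [List.getLast?_eq_getElem?, hlen,
      List.getElem?_eq_getElem (by rw [hlen]; omega),
      PhiF_getElem ST (s - 1) (by omega), Option.some_inj]
    rw [cntF_eq_card ST.1 le_rfl, cntF_eq_card ST.2 le_rfl, hScard, hTcard,
      elF_last h₁, elF_last h₂, htop]
  have hhead : (PhiF A B L1 L2 ST).head? ≠ some (⊥ : Subgroup G) := by
    rw [List.head?_eq_getElem?, List.getElem?_eq_getElem (by rw [hlen]; omega),
      PhiF_getElem ST 0 hs]
    rw [Ne, Option.some_inj]
    intro hc
    have h0mem : (⟨0, hs⟩ : Fin s) ∈ ST.1 ∪ ST.2 := by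
      rw [hunion]; exact Finset.mem_univ _
    rcases Finset.mem_union.mp h0mem with hm | hm
    · have h1 : cntF ST.1 0 = 1 := by rw [cntF_zero ST.1 hs, if_pos hm]
      have h2 : elF A L1 (cntF ST.1 0) = ⊥ :=
        le_bot_iff.mp (hc ▸ le_sup_left)
      rw [h1] at h2
      exact elF_ne_bot h₁ le_rfl (chainIn_length_pos h₁) h2
    · have h1 : cntF ST.2 0 = 1 := by rw [cntF_zero ST.2 hs, if_pos hm]
      have h2 : elF B L2 (cntF ST.2 0) = ⊥ :=
        le_bot_iff.mp (hc ▸ le_sup_right)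
      rw [h1] at h2
      exact elF_ne_bot h₂ le_rfl (chainIn_length_pos h₂) h2
  refine ⟨⟨⟨hne_nil, hchain, hlast⟩, hhead⟩, hlen, ?_, ?_⟩
  · unfold restrictChain
    have hmap : (PhiF A B L1 L2 ST).map (fun H => H ⊓ A)
        = List.ofFn (fun t : Fin s => elF A L1 (cntF ST.1 t.val)) := by
      unfold PhiF
      rw [List.map_ofFn]
      congr 1
      funext t
      exact hvA t.val
    rw [hmap]
    exact core_restrict h₁ hs ST.1 hScard
  · unfold restrictChain
    have hmap : (PhiF A B L1 L2 ST).map (fun H => H ⊓ B)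
        = List.ofFn (fun t : Fin s => elF B L2 (cntF ST.2 t.val)) := by
      unfold PhiF
      rw [List.map_ofFn]
      congr 1
      funext t
      exact hvB t.val
    rw [hmap]
    exact core_restrict h₂ hs ST.2 hTcard

lemma phi_inj (h₁ : ChainIn A L1) (h₂ : ChainIn B L2)
    (hbot : A ⊓ B = ⊥) (hbot' : B ⊓ A = ⊥)
    (hs : 0 < s) {ST ST' : Finset (Fin s) × Finset (Fin s)}
    (hScard : ST.1.card = L1.length) (hTcard : ST.2.card = L2.length)
    (hScard' : ST'.1.card = L1.length) (hTcard' : ST'.2.card = L2.length)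
    (heq : PhiF A B L1 L2 ST = PhiF A B L1 L2 ST') : ST = ST' := by
  have hvA : ∀ (X : Finset (Fin s)) (Y : Finset (Fin s)) (u : ℕ),
      (elF A L1 (cntF X u) ⊔ elF B L2 (cntF Y u)) ⊓ A = elF A L1 (cntF X u) :=
    fun X Y u => sup_inf_eq_left hbot (elF_le h₁ _) (elF_le h₂ _)
  have hvB : ∀ (X : Finset (Fin s)) (Y : Finset (Fin s)) (u : ℕ),
      (elF A L1 (cntF X u) ⊔ elF B L2 (cntF Y u)) ⊓ B = elF B L2 (cntF Y u) := by
    intro X Y u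
    rw [sup_comm]
    exact sup_inf_eq_left hbot' (elF_le h₂ _) (elF_le h₁ _)
  have hpt : ∀ u, u < s →
      elF A L1 (cntF ST.1 u) ⊔ elF B L2 (cntF ST.2 u)
        = elF A L1 (cntF ST'.1 u) ⊔ elF B L2 (cntF ST'.2 u) := by
    intro u hu
    have h0 : (PhiF A B L1 L2 ST)[u]? = (PhiF A B L1 L2 ST')[u]? := by rw [heq]
    rw [List.getElem?_eq_getElem (by rw [PhiF_length]; exact hu),
      List.getElem?_eq_getElem (by rw [PhiF_length]; exact hu),
      PhiF_getElem ST u hu, PhiF_getElem ST' u hu, Option.some_inj] at h0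
    exact h0
  have hcnt1 : ∀ u, u < s → cntF ST.1 u = cntF ST'.1 u := by
    intro u hu
    have := congrArg (fun x => x ⊓ A) (hpt u hu)
    rw [hvA ST.1 ST.2 u, hvA ST'.1 ST'.2 u] at this
    exact elF_inj h₁ (hScard ▸ cntF_le ST.1 u) (hScard' ▸ cntF_le ST'.1 u) this
  have hcnt2 : ∀ u, u < s → cntF ST.2 u = cntF ST'.2 u := by
    intro u hu
    have := congrArg (fun x => x ⊓ B) (hpt u hu)
    rw [hvB ST.1 ST.2 u, hvB ST'.1 ST'.2 u] at this
    exact elF_inj h₂ (hTcard ▸ cntF_le ST.2 u) (hTcard' ▸ cntF_le ST'.2 u) this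
  have e1 : ST.1 = ST'.1 := by
    ext t
    rw [cntF_mem_iff ST.1, cntF_mem_iff ST'.1]
    rw [hcnt1 t.val t.2]
    rcases Nat.eq_zero_or_pos t.val with h | h
    · rw [if_pos h, if_pos h]
    · rw [if_neg (by omega), if_neg (by omega), hcnt1 (t.val - 1) (by have := t.2; omega)]
  have e2 : ST.2 = ST'.2 := by
    ext t
    rw [cntF_mem_iff ST.2, cntF_mem_iff ST'.2]
    rw [hcnt2 t.val t.2]
    rcases Nat.eq_zero_or_pos t.val with h | h
    · rw [if_pos h, if_pos h]
    · rw [if_neg (by omega), if_neg (by omega), hcnt2 (t.val - 1) (by have := t.2; omega)]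
  exact Prod.ext e1 e2

lemma phi_surj (h₁ : ChainIn A L1) (h₂ : ChainIn B L2)
    (hdec : ∀ H : Subgroup G, H = (H ⊓ A) ⊔ (H ⊓ B))
    (hs : 0 < s) {Γ : List (Subgroup G)}
    (hH : HChain G Γ) (hlen : Γ.length = s)
    (hres1 : restrictChain A Γ = L1) (hres2 : restrictChain B Γ = L2) :
    ∃ ST : Finset (Fin s) × Finset (Fin s), ST.1.card = L1.length ∧
      ST.2.card = L2.length ∧ ST.1 ∪ ST.2 = Finset.univ ∧ PhiF A B L1 L2 ST = Γ := by
  have hlen' : ∀ t : Fin s, t.val < Γ.length := fun t => by rw [hlen]; exact t.2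
  set f : Fin s → Subgroup G := fun t => Γ.get ⟨t.val, hlen' t⟩ with hf
  have hΓeq : Γ = List.ofFn f := by
    apply List.ext_getElem (by rw [List.length_ofFn, hlen])
    intro u hu1 hu2
    rw [List.getElem_ofFn]
    rfl
  have hsorted : List.Pairwise (· < ·) Γ := List.isChain_iff_pairwise.mp hH.1.2.1
  have hstrict : ∀ (u : ℕ) (hu : u + 1 < s),
      f ⟨u, by omega⟩ < f ⟨u + 1, hu⟩ := by
    intro u hu
    exact hsorted.sortedLT.strictMono_get (show (⟨u, _⟩ : Fin Γ.length) < ⟨u + 1, _⟩ by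
      rw [Fin.mk_lt_mk]; omega)
  have hmonof : Monotone f := by
    intro t t' htt
    rcases lt_or_eq_of_le htt with h | h
    · exact le_of_lt (hsorted.sortedLT.strictMono_get (show (⟨t.val, _⟩ : Fin Γ.length)
        < ⟨t'.val, _⟩ by rw [Fin.mk_lt_mk]; exact h))
    · rw [h]
  have hlastf : f ⟨s - 1, by omega⟩ = ⊤ := by
    have h1 := hH.1.2.2
    rw [List.getLast?_eq_getElem?, hlen,
      List.getElem?_eq_getElem (by rw [hlen]; omega), Option.some_inj] at h1
    rw [hf]
    dsimp only
    rw [List.get_eq_getElem]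
    exact h1
  have hheadf : f ⟨0, hs⟩ ≠ ⊥ := by
    have h1 := hH.2
    rw [List.head?_eq_getElem?, List.getElem?_eq_getElem (by rw [hlen]; omega),
      Ne, Option.some_inj] at h1
    rw [hf]
    dsimp only
    rw [List.get_eq_getElem]
    exact h1
  have hmonoA : Monotone (fun t : Fin s => f t ⊓ A) :=
    fun t t' htt => inf_le_inf_right A (hmonof htt)
  have hmonoB : Monotone (fun t : Fin s => f t ⊓ B) :=
    fun t t' htt => inf_le_inf_right B (hmonof htt)
  have hresA : ((List.ofFn (fun t : Fin s => f t ⊓ A)).destutter (· ≠ ·)).filter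
      (fun H => decide (H ≠ ⊥)) = L1 := by
    rw [← hres1]
    unfold restrictChain
    rw [hΓeq, List.map_ofFn]
    rfl
  have hresB : ((List.ofFn (fun t : Fin s => f t ⊓ B)).destutter (· ≠ ·)).filter
      (fun H => decide (H ≠ ⊥)) = L2 := by
    rw [← hres2]
    unfold restrictChain
    rw [hΓeq, List.map_ofFn]
    rfl
  obtain ⟨S, hScard, haS⟩ := analyze_side h₁ hs (fun t : Fin s => f t ⊓ A) hmonoA
    (by rw [hlastf, top_inf_eq]) hresA
  obtain ⟨T, hTcard, haT⟩ := analyze_side h₂ hs (fun t : Fin s => f t ⊓ B) hmonoB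
    (by rw [hlastf, top_inf_eq]) hresB
  refine ⟨(S, T), hScard, hTcard, ?_, ?_⟩
  · ext t
    simp only [Finset.mem_union, Finset.mem_univ, iff_true]
    by_contra hcon
    push_neg at hcon
    obtain ⟨hnS, hnT⟩ := hcon
    rcases t with ⟨tv, htv⟩
    rcases Nat.eq_zero_or_pos tv with h0 | h0
    · subst h0
      have hc1 : cntF S 0 = 0 := by rw [cntF_zero S hs, if_neg hnS]
      have hc2 : cntF T 0 = 0 := by rw [cntF_zero T hs, if_neg hnT]
      have ha := haS ⟨0, htv⟩
      have hb := haT ⟨0, htv⟩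
      rw [hc1, elF_zero] at ha
      rw [hc2, elF_zero] at hb
      have : f ⟨0, htv⟩ = ⊥ := by
        rw [hdec (f ⟨0, htv⟩), ha, hb, sup_idem]
      exact hheadf this
    · obtain ⟨u, rfl⟩ : ∃ u, tv = u + 1 := ⟨tv - 1, by omega⟩
      have hc1 : cntF S (u + 1) = cntF S u := by
        rw [cntF_succ S htv, if_neg hnS]
        omega
      have hc2 : cntF T (u + 1) = cntF T u := by
        rw [cntF_succ T htv, if_neg hnT]
        omega
      have ha1 := haS ⟨u, by omega⟩
      have ha2 := haS ⟨u + 1, htv⟩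
      have hb1 := haT ⟨u, by omega⟩
      have hb2 := haT ⟨u + 1, htv⟩
      rw [hc1] at ha2
      rw [hc2] at hb2
      have heqf : f ⟨u + 1, htv⟩ = f ⟨u, by omega⟩ := by
        rw [hdec (f ⟨u + 1, htv⟩), hdec (f ⟨u, by omega⟩), ha1, ha2, hb1, hb2]
      exact absurd heqf (ne_of_gt (hstrict u htv))
  · rw [hΓeq]
    unfold PhiF
    congr 1
    funext t
    rw [← haS t, ← haT t]
    exact (hdec (f t)).symm

end PhiPart

lemma count_P (s i j : ℕ) (his : i ≤ s) (hjs : j ≤ s) (hij : s ≤ i + j) :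
    (((Finset.univ : Finset (Fin s)).powersetCard i ×ˢ
        (Finset.univ : Finset (Fin s)).powersetCard j).filter
      (fun ST => ST.1 ∪ ST.2 = Finset.univ)).card
      = s.choose i * i.choose (i + j - s) := by
  set D := ((Finset.univ : Finset (Fin s)).powersetCard i).sigma
    (fun S => S.powersetCard (i + j - s)) with hD
  have hcard : D.card = s.choose i * i.choose (i + j - s) := by
    rw [hD, Finset.card_sigma]
    rw [Finset.sum_congr rfl (fun S hS => by
      rw [Finset.card_powersetCard, Finset.mem_powersetCard_univ.mp hS])]
    rw [Finset.sum_const, smul_eq_mul, Finset.card_powersetCard, Finset.card_univ,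
      Fintype.card_fin]
  rw [← hcard]
  refine (Finset.card_nbij (fun x => (x.1, x.1ᶜ ∪ x.2)) ?_ ?_ ?_).symm
  · rintro ⟨S, U⟩ hx
    rw [Finset.mem_coe, Finset.mem_sigma] at hx
    obtain ⟨hS, hU⟩ := hx
    rw [Finset.mem_powersetCard_univ] at hS
    rw [Finset.mem_powersetCard] at hU
    obtain ⟨hUS, hUcard⟩ := hU
    have hdisj : Disjoint Sᶜ U := by
      rw [Finset.disjoint_left]
      intro x hx1 hx2
      exact (Finset.mem_compl.mp hx1) (hUS hx2)
    rw [Finset.mem_coe, Finset.mem_filter, Finset.mem_product]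
    refine ⟨⟨Finset.mem_powersetCard_univ.mpr hS, Finset.mem_powersetCard_univ.mpr ?_⟩, ?_⟩
    · rw [Finset.card_union_of_disjoint hdisj, Finset.card_compl, Fintype.card_fin, hS,
        hUcard]
      omega
    · ext x
      simp only [Finset.mem_union, Finset.mem_compl, Finset.mem_univ, iff_true]
      tauto
  · rintro ⟨S, U⟩ hx ⟨S', U'⟩ hy h
    simp only [Finset.mem_coe, hD, Finset.mem_sigma, Finset.mem_powersetCard_univ,
      Finset.mem_powersetCard] at hx hy
    rw [Prod.mk.injEq] at h
    obtain ⟨h1, h2⟩ := h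
    subst h1
    have hUU : U = U' := by
      ext z
      by_cases hz : z ∈ S
      · have hz' : z ∉ Sᶜ := by simp [hz]
        constructor
        · intro hzU
          have : z ∈ Sᶜ ∪ U' := by rw [← h2]; exact Finset.mem_union_right _ hzU
          rcases Finset.mem_union.mp this with h | h
          · exact absurd h hz'
          · exact h
        · intro hzU
          have : z ∈ Sᶜ ∪ U := by rw [h2]; exact Finset.mem_union_right _ hzU
          rcases Finset.mem_union.mp this with h | h
          · exact absurd h hz'
          · exact h
      · constructor
        · intro hzU; exact absurd (hx.2.1 hzU) hz
        · intro hzU; exact absurd (hy.2.1 hzU) hz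
    subst hUU
    rfl
  · rintro ⟨S, T⟩ hmem
    simp only [Finset.mem_coe, Finset.mem_filter, Finset.mem_product,
      Finset.mem_powersetCard_univ] at hmem
    obtain ⟨⟨hScard, hTcard⟩, hunion⟩ := hmem
    have hTeq : T = Sᶜ ∪ (T ∩ S) := by
      ext x
      simp only [Finset.mem_union, Finset.mem_compl, Finset.mem_inter]
      constructor
      · intro hxT
        by_cases hxS : x ∈ S
        · exact Or.inr ⟨hxT, hxS⟩
        · exact Or.inl hxS
      · rintro (hxS | ⟨hxT, _⟩)
        · have : x ∈ S ∪ T := by rw [hunion]; exact Finset.mem_univ x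
          rcases Finset.mem_union.mp this with h | h
          · exact absurd h hxS
          · exact h
        · exact hxT
    have hdisj : Disjoint Sᶜ (T ∩ S) := by
      rw [Finset.disjoint_left]
      intro x hx1 hx2
      exact (Finset.mem_compl.mp hx1) (Finset.mem_inter.mp hx2).2
    have hcardTS : (T ∩ S).card = i + j - s := by
      have := congrArg Finset.card hTeq
      rw [Finset.card_union_of_disjoint hdisj, Finset.card_compl, Fintype.card_fin,
        hScard, hTcard] at this
      omega
    refine ⟨⟨S, T ∩ S⟩, ?_, ?_⟩
    · simp only [Finset.mem_coe, hD, Finset.mem_sigma, Finset.mem_powersetCard_univ,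
        Finset.mem_powersetCard]
      exact ⟨⟨Finset.subset_univ S, hScard⟩, Finset.inter_subset_right, hcardTS⟩
    · simp only [Prod.mk.injEq]
      exact ⟨trivial, hTeq.symm⟩


theorem stmt5 (G : Type*) [CommGroup G] [Finite G] (p q n m : ℕ)
    (hp : p.Prime) (hq : q.Prime) (hpq : p ≠ q) (hn : 1 ≤ n) (hm : 1 ≤ m)
    (hG : Nat.card G = p ^ n * q ^ m)
    (A B : Subgroup G) (hA : Nat.card A = p ^ n) (hB : Nat.card B = q ^ m)
    (Γ₁ Γ₂ : List (Subgroup G)) (h₁ : ChainIn A Γ₁) (h₂ : ChainIn B Γ₂)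
    (i j s : ℕ) (hi : Γ₁.length = i) (hj : Γ₂.length = j)
    (hs₁ : max i j ≤ s) (hs₂ : s ≤ i + j) :
    {Γ : List (Subgroup G) | HChain G Γ ∧ Γ.length = s ∧
        restrictChain A Γ = Γ₁ ∧ restrictChain B Γ = Γ₂}.ncard
      = s.choose i * i.choose (i + j - s) := by
  have hibound : 1 ≤ i := by rw [← hi]; exact chainIn_length_pos h₁
  have hjbound : 1 ≤ j := by rw [← hj]; exact chainIn_length_pos h₂
  have his : i ≤ s := le_trans (le_max_left i j) hs₁
  have hjs : j ≤ s := le_trans (le_max_right i j) hs₁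
  have hs : 0 < s := by omega
  have hbotAB : A ⊓ B = ⊥ := inf_AB_bot hp hq hpq A B hA hB
  have hbotBA : B ⊓ A = ⊥ := by rw [inf_comm]; exact hbotAB
  have hdec : ∀ H : Subgroup G, H = (H ⊓ A) ⊔ (H ⊓ B) := decomp hp hq hpq hG A B hA hB
  have htop : A ⊔ B = ⊤ := by
    have h := hdec ⊤
    rw [top_inf_eq, top_inf_eq] at h
    exact h.symm
  set P : Finset (Finset (Fin s) × Finset (Fin s)) :=
    ((Finset.univ : Finset (Fin s)).powersetCard i ×ˢ
      (Finset.univ : Finset (Fin s)).powersetCard j).filter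
      (fun ST => ST.1 ∪ ST.2 = Finset.univ) with hPdef
  have hmemP : ∀ ST : Finset (Fin s) × Finset (Fin s), ST ∈ P ↔
      ST.1.card = i ∧ ST.2.card = j ∧ ST.1 ∪ ST.2 = Finset.univ := by
    intro ST
    rw [hPdef, Finset.mem_filter, Finset.mem_product, Finset.mem_powersetCard_univ,
      Finset.mem_powersetCard_univ]
    tauto
  have himg : {Γ : List (Subgroup G) | HChain G Γ ∧ Γ.length = s ∧
      restrictChain A Γ = Γ₁ ∧ restrictChain B Γ = Γ₂}
      = PhiF A B Γ₁ Γ₂ '' (↑P : Set (Finset (Fin s) × Finset (Fin s))) := by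
    ext Γ
    simp only [Set.mem_setOf_eq, Set.mem_image, Finset.mem_coe]
    constructor
    · rintro ⟨hHC, hlenΓ, hr1, hr2⟩
      obtain ⟨ST, hc1, hc2, hun, heq⟩ := phi_surj h₁ h₂ hdec hs hHC hlenΓ hr1 hr2
      exact ⟨ST, (hmemP ST).mpr ⟨by rw [hc1, hi], by rw [hc2, hj], hun⟩, heq⟩
    · rintro ⟨ST, hSTP, rfl⟩
      obtain ⟨hc1, hc2, hun⟩ := (hmemP ST).mp hSTP
      exact phi_mem h₁ h₂ hbotAB hbotBA htop hs (hc1.trans hi.symm) (hc2.trans hj.symm) hun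
  have hinj : Set.InjOn (PhiF A B Γ₁ Γ₂) (↑P : Set (Finset (Fin s) × Finset (Fin s))) := by
    intro x hx y hy hxy
    rw [Finset.mem_coe] at hx hy
    obtain ⟨hx1, hx2, _⟩ := (hmemP x).mp hx
    obtain ⟨hy1, hy2, _⟩ := (hmemP y).mp hy
    exact phi_inj h₁ h₂ hbotAB hbotBA hs (hx1.trans hi.symm) (hx2.trans hj.symm)
      (hy1.trans hi.symm) (hy2.trans hj.symm) hxy
  rw [himg, Set.ncard_image_of_injOn hinj, Set.ncard_coe_finset, hPdef]
  exact count_P s i j his hjs hs₂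
end

section
/- Let p and q be distinct primes, let G be an abelian group of order p^n q^m (n, m ≥ 1) with Sylow p-subgroup A and Sylow q-subgroup B, so G = A × B. Fix a proper subgroup chain Γ₁: A₁ < ⋯ < A_i = A of A with A₁ ≠ {e} and a proper subgroup chain Γ₂: B₁ < ⋯ < B_j = B of B with B₁ ≠ {e}, and assume i ≥ j. Then the total number of proper subgroup chains ending in G with nontrivial initial term whose restriction to A is Γ₁ and whose restriction to B is Γ₂ equals h(i,j) = ∑_{k=0}^{j} C(i+k, i)·C(i, j−k). -/
open scoped Classical

namespace Stmt6Combined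


def M : ℕ → ℕ → ℕ
  | 0, 0 => 0
  | _+1, 0 => 1
  | 0, _+1 => 1
  | a+1, b+1 => M a (b+1) + M (a+1) b + M a b + if a = 0 ∧ b = 0 then 1 else 0

def F (i j : ℕ) : ℕ := ∑ k ∈ Finset.range (j + 1), (i + k).choose i * i.choose (j - k)

def Fa (i j : ℕ) : ℕ := ∑ p ∈ Finset.HasAntidiagonal.antidiagonal j, (i + p.1).choose i * i.choose p.2

lemma F_eq_Fa (i j : ℕ) : F i j = Fa i j := by
  rw [Fa, Finset.Nat.sum_antidiagonal_eq_sum_range_succ_mk, F]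

lemma Fa_rec (i j : ℕ) : Fa (i+1) (j+1) = Fa i (j+1) + Fa (i+1) j + Fa i j := by
  have pascal : ∀ a : ℕ, (i + 1 + a).choose (i+1) = (i+a).choose (i+1) + (i+a).choose i := by
    intro a
    have : i + 1 + a = (i + a) + 1 := by ring
    rw [this, Nat.choose_succ_succ (i+a) i, Nat.add_comm]
  have split : Fa (i+1) (j+1)
      = (∑ p ∈ Finset.HasAntidiagonal.antidiagonal (j+1), (i + p.1).choose (i+1) * (i+1).choose p.2)
        + (∑ p ∈ Finset.HasAntidiagonal.antidiagonal (j+1), (i + p.1).choose i * (i+1).choose p.2) := by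
    rw [Fa, ← Finset.sum_add_distrib]
    refine Finset.sum_congr rfl fun p _ => ?_
    rw [pascal p.1, add_mul]
  have T1 : (∑ p ∈ Finset.HasAntidiagonal.antidiagonal (j+1), (i + p.1).choose (i+1) * (i+1).choose p.2)
      = Fa (i+1) j := by
    rw [Finset.Nat.sum_antidiagonal_succ (f := fun p => (i + p.1).choose (i+1) * (i+1).choose p.2)]
    simp only [Nat.add_zero, Nat.choose_self, Nat.choose_succ_self, zero_mul, zero_add]
    rw [Fa]
    refine Finset.sum_congr rfl fun p _ => ?_
    rw [show i + (p.1 + 1) = i + 1 + p.1 by ring]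
  have T2 : (∑ p ∈ Finset.HasAntidiagonal.antidiagonal (j+1), (i + p.1).choose i * (i+1).choose p.2)
      = Fa i (j+1) + Fa i j := by
    rw [Finset.Nat.sum_antidiagonal_succ' (f := fun p => (i + p.1).choose i * (i+1).choose p.2)]
    have peel : Fa i (j+1) = (i + (j+1)).choose i * i.choose 0
        + ∑ p ∈ Finset.HasAntidiagonal.antidiagonal j, (i + p.1).choose i * i.choose (p.2+1) := by
      rw [Fa, Finset.Nat.sum_antidiagonal_succ' (f := fun p => (i + p.1).choose i * i.choose p.2)]
    have expand : ∀ p : ℕ × ℕ, (i + p.1).choose i * (i+1).choose (p.2+1)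
        = (i + p.1).choose i * i.choose p.2 + (i + p.1).choose i * i.choose (p.2+1) := by
      intro p; rw [Nat.choose_succ_succ i p.2, mul_add]
    rw [Finset.sum_congr rfl fun p _ => expand p, Finset.sum_add_distrib, peel]
    simp only [Nat.choose_zero_right, mul_one, Nat.choose_self]
    rw [Fa]; ring
  rw [split, T1, T2]; ring

lemma F_rec (i j : ℕ) : F (i+1) (j+1) = F i (j+1) + F (i+1) j + F i j := by
  simp only [F_eq_Fa]; exact Fa_rec i j

lemma F_zero_left (b : ℕ) : F 0 b = 1 := by
  rw [F]
  rw [Finset.sum_eq_single b]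
  · simp
  · intro k hk hne
    have hk' : k < b + 1 := Finset.mem_range.mp hk
    have : 0 < b - k := by omega
    simp [Nat.choose_eq_zero_of_lt this]
  · intro h; exact absurd (Finset.self_mem_range_succ b) h

lemma F_zero_right (i : ℕ) : F i 0 = 1 := by simp [F]

lemma M_zero_left (b : ℕ) (hb : 1 ≤ b) : M 0 b = 1 := by
  cases b with | zero => omega | succ b => simp [M]

lemma M_zero_right (a : ℕ) (ha : 1 ≤ a) : M a 0 = 1 := by
  cases a with | zero => omega | succ a => simp [M]

lemma F_eq_M : ∀ i j : ℕ, 1 ≤ i → 1 ≤ j → F i j = M i j := by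
  have key : ∀ N i j : ℕ, i + j ≤ N → 1 ≤ i → 1 ≤ j → F i j = M i j := by
    intro N
    induction N with
    | zero => intro i j h hi hj; omega
    | succ N IH =>
      intro i j h hi hj
      obtain ⟨i, rfl⟩ := Nat.exists_eq_add_of_le hi
      obtain ⟨j, rfl⟩ := Nat.exists_eq_add_of_le hj
      rw [add_comm 1 i, add_comm 1 j] at *
      rw [F_rec, M]
      rcases Nat.eq_zero_or_pos i with hi0 | hi0
      · subst hi0
        rcases Nat.eq_zero_or_pos j with hj0 | hj0
        · subst hj0
          simp [F, Finset.sum_range_succ, M]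
        · have h1 : F 1 j = M 1 j := IH 1 j (by omega) le_rfl hj0
          rw [F_zero_left, F_zero_left, h1, M_zero_left _ (by omega), M_zero_left _ hj0]
          have : ¬(0 = 0 ∧ j = 0) := by omega
          simp [this]
          omega
      · rcases Nat.eq_zero_or_pos j with hj0 | hj0
        · subst hj0
          have h1 : F i 1 = M i 1 := IH i 1 (by omega) hi0 le_rfl
          rw [F_zero_right, F_zero_right, h1, M_zero_right _ hi0, M_zero_right _ (by omega)]
          have : ¬(i = 0 ∧ 0 = 0) := by omega
          simp [this]
          omega
        · have h1 : F i (j+1) = M i (j+1) := IH i (j+1) (by omega) hi0 (by omega)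
          have h2 : F (i+1) j = M (i+1) j := IH (i+1) j (by omega) (by omega) hj0
          have h3 : F i j = M i j := IH i j (by omega) hi0 hj0
          rw [h1, h2, h3]
          have : ¬(i = 0 ∧ j = 0) := by omega
          simp [this]
  intro i j hi hj; exact key (i+j) i j le_rfl hi hj




def Step (s t : ℕ × ℕ) : Prop :=
  (t.1 = s.1 ∨ t.1 = s.1 + 1) ∧ (t.2 = s.2 ∨ t.2 = s.2 + 1) ∧ s ≠ t

def ST (t : ℕ × ℕ) : Prop := t = (0,1) ∨ t = (1,0) ∨ t = (1,1)

def PathsTo (t : ℕ × ℕ) : Set (List (ℕ × ℕ)) :=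
  {l | l ≠ [] ∧ l.IsChain Step ∧
    (l.head? = some (0,1) ∨ l.head? = some (1,0) ∨ l.head? = some (1,1)) ∧
    l.getLast? = some t}

lemma step_le {s t : ℕ × ℕ} (h : Step s t) : s.1 ≤ t.1 ∧ s.2 ≤ t.2 := by
  obtain ⟨h1, h2, _⟩ := h; omega

lemma mem_le_getLast {l : List (ℕ × ℕ)} (hc : l.IsChain Step) {z : ℕ × ℕ}
    (hz : l.getLast? = some z) {x : ℕ × ℕ} (hx : x ∈ l) : x.1 ≤ z.1 ∧ x.2 ≤ z.2 := by
  have hc' : l.IsChain (fun s t => s.1 ≤ t.1 ∧ s.2 ≤ t.2) := hc.imp fun _ _ h => step_le h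
  haveI : IsTrans (ℕ × ℕ) (fun s t => s.1 ≤ t.1 ∧ s.2 ≤ t.2) :=
    ⟨fun a b c h1 h2 => ⟨le_trans h1.1 h2.1, le_trans h1.2 h2.2⟩⟩
  have hpw : l.Pairwise (fun s t => s.1 ≤ t.1 ∧ s.2 ≤ t.2) := by
    rw [List.isChain_iff_pairwise] at hc'
    exact hc'
  have hne : l ≠ [] := by rintro rfl; simp at hz
  have hdec : l.dropLast ++ [l.getLast hne] = l := List.dropLast_append_getLast hne
  have hzz : z = l.getLast hne := by
    rw [List.getLast?_eq_getLast hne] at hz; exact (Option.some_injective _ hz).symm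
  subst hzz
  rcases (by rw [← hdec] at hx; exact List.mem_append.mp hx) with h | h
  · have := (List.pairwise_append.mp (hdec ▸ hpw : (l.dropLast ++ [l.getLast hne]).Pairwise _)).2.2
    exact this x h _ (by simp)
  · simp at h; subst h; exact ⟨le_rfl, le_rfl⟩

lemma mem_paths_iff {t : ℕ × ℕ} {l : List (ℕ × ℕ)} :
    l ∈ PathsTo t ↔ (l = [t] ∧ ST t) ∨
      ∃ s, Step s t ∧ ∃ l' ∈ PathsTo s, l = l' ++ [t] := by
  constructor
  · rintro ⟨hne, hch, hhd, hlast⟩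
    have hdec : l.dropLast ++ [l.getLast hne] = l := List.dropLast_append_getLast hne
    have hzz : l.getLast hne = t := by
      rw [List.getLast?_eq_getLast hne] at hlast; exact Option.some_injective _ hlast
    rcases eq_or_ne l.dropLast [] with hd | hd
    · left
      have : l = [t] := by rw [← hdec, hd, hzz]; rfl
      refine ⟨this, ?_⟩
      rw [this] at hhd; simp [List.head?] at hhd
      rcases hhd with h | h | h <;> simp [ST, h]
    · right
      set l' := l.dropLast with hl'
      have hch' : (l' ++ [t]).IsChain Step := by rw [hzz] at hdec; rw [hdec]; exact hch
      rw [List.isChain_append] at hch'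
      obtain ⟨hcl', _, hrel⟩ := hch'
      have hlast' : l'.getLast? = some (l'.getLast hd) := List.getLast?_eq_getLast hd
      refine ⟨l'.getLast hd, hrel _ hlast' t rfl, l', ⟨hd, hcl', ?_, hlast'⟩, by rw [hzz] at hdec; exact hdec.symm⟩
      have hh : l.head? = l'.head? := by
        conv_lhs => rw [← hdec]
        rcases l' with _ | ⟨x, l''⟩
        · exact absurd rfl hd
        · simp
      rw [hh] at hhd; exact hhd
  · rintro (⟨rfl, hst⟩ | ⟨s, hs, l', ⟨hne, hch, hhd, hlast⟩, rfl⟩)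
    · refine ⟨by simp, by simp, ?_, by simp⟩
      rcases hst with h | h | h <;> simp [h]
    · refine ⟨by simp, ?_, ?_, by simp⟩
      · rw [List.isChain_append]
        refine ⟨hch, by simp, ?_⟩
        intro x hx y hy
        simp at hy; subst hy
        rw [hlast] at hx; simp at hx; subst hx; exact hs
      · have hh : (l' ++ [t]).head? = l'.head? := by
          rcases l' with _ | ⟨x, l''⟩
          · exact absurd rfl hne
          · simp
        rw [hh]; exact hhd

def App (s t : ℕ × ℕ) : Set (List (ℕ × ℕ)) := (fun l => l ++ [t]) '' PathsTo s

lemma app_inj (t : ℕ × ℕ) : Function.Injective (fun l : List (ℕ × ℕ) => l ++ [t]) := by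
  intro x y h
  have := congrArg List.dropLast h
  simpa [List.dropLast_concat] using this

lemma app_finite {s t : ℕ × ℕ} (h : (PathsTo s).Finite) : (App s t).Finite := h.image _

lemma app_ncard {s t : ℕ × ℕ} : (App s t).ncard = (PathsTo s).ncard :=
  Set.ncard_image_of_injective _ (app_inj t)

lemma app_disj {s₁ s₂ t : ℕ × ℕ} (h : s₁ ≠ s₂) : Disjoint (App s₁ t) (App s₂ t) := by
  rw [Set.disjoint_left]
  rintro l ⟨l₁, h₁, rfl⟩ ⟨l₂, h₂, heq⟩
  have : l₂ = l₁ := app_inj t heq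
  subst this
  exact h (by rw [← Option.some_injective _ (h₁.2.2.2.symm.trans h₂.2.2.2)])

lemma singleton_disj_app {x s t : ℕ × ℕ} :
    Disjoint ({[x]} : Set (List (ℕ × ℕ))) (App s t) := by
  rw [Set.disjoint_left]
  rintro l rfl ⟨l₁, h₁, heq⟩
  have := congrArg List.length heq
  simp at this
  exact h₁.1 this

lemma M_def (a b : ℕ) : M (a+1) (b+1) = M a (b+1) + M (a+1) b
    + M a b + if a = 0 ∧ b = 0 then 1 else 0 := by simp [M]

lemma paths00 : PathsTo (0,0) = ∅ := by
  ext l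
  simp only [Set.mem_empty_iff_false, iff_false]
  rintro ⟨hne, hch, hhd, hlast⟩
  have hmem : ∀ x : ℕ × ℕ, l.head? = some x → x ∈ l := fun x hx => List.mem_of_mem_head? hx
  rcases hhd with h | h | h <;>
    · have := mem_le_getLast hch hlast (hmem _ h)
      simp at this

lemma step_pred_x (a : ℕ) (s : ℕ × ℕ) : Step s (a+1, 0) ↔ s = (a, 0) := by
  obtain ⟨x, y⟩ := s
  simp only [Step, Prod.ext_iff, Prod.mk.injEq, ne_eq, not_and]
  constructor
  · rintro ⟨h1, h2, h3⟩; omega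
  · rintro ⟨rfl, rfl⟩; omega

lemma step_pred_y (b : ℕ) (s : ℕ × ℕ) : Step s (0, b+1) ↔ s = (0, b) := by
  obtain ⟨x, y⟩ := s
  simp only [Step, Prod.ext_iff, Prod.mk.injEq, ne_eq, not_and]
  constructor
  · rintro ⟨h1, h2, h3⟩; omega
  · rintro ⟨rfl, rfl⟩; omega

lemma step_pred_xy (a b : ℕ) (s : ℕ × ℕ) :
    Step s (a+1, b+1) ↔ s = (a, b+1) ∨ s = (a+1, b) ∨ s = (a, b) := by
  obtain ⟨x, y⟩ := s
  simp only [Step, Prod.ext_iff, Prod.mk.injEq, ne_eq, not_and]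
  constructor
  · rintro ⟨h1, h2, h3⟩; omega
  · rintro (⟨rfl, rfl⟩ | ⟨rfl, rfl⟩ | ⟨rfl, rfl⟩) <;> omega

lemma st_x (a : ℕ) : ST (a+1, 0) ↔ a = 0 := by
  simp only [ST, Prod.mk.injEq]
  constructor
  · rintro (⟨h1, h2⟩ | ⟨h1, h2⟩ | ⟨h1, h2⟩) <;> omega
  · rintro rfl; simp

lemma st_y (b : ℕ) : ST (0, b+1) ↔ b = 0 := by
  simp only [ST, Prod.mk.injEq]
  constructor
  · rintro (⟨h1, h2⟩ | ⟨h1, h2⟩ | ⟨h1, h2⟩) <;> omega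
  · rintro rfl; simp

lemma st_xy (a b : ℕ) : ST (a+1, b+1) ↔ a = 0 ∧ b = 0 := by
  simp only [ST, Prod.mk.injEq]
  constructor
  · rintro (⟨h1, h2⟩ | ⟨h1, h2⟩ | ⟨h1, h2⟩) <;> omega
  · rintro ⟨rfl, rfl⟩; simp

lemma decomp_x (a : ℕ) : PathsTo (a+1, 0)
    = (if a = 0 then {[((1:ℕ), (0:ℕ))]} else (∅ : Set (List (ℕ × ℕ)))) ∪ App (a, 0) (a+1, 0) := by
  ext l
  rw [Set.mem_union, show (l ∈ PathsTo (a+1,0)) = (l ∈ PathsTo (a+1,0)) from rfl, mem_paths_iff]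
  constructor
  · rintro (⟨rfl, hst⟩ | ⟨s, hs, l', hl', rfl⟩)
    · left; rw [st_x] at hst; subst hst; simp
    · rw [step_pred_x] at hs; subst hs; right; exact ⟨l', hl', rfl⟩
  · rintro (hl | ⟨l', hl', rfl⟩)
    · split_ifs at hl with ha
      · subst ha; simp at hl; subst hl; exact Or.inl ⟨rfl, by rw [st_x]⟩
      · simp at hl
    · exact Or.inr ⟨(a,0), (step_pred_x a _).mpr rfl, l', hl', rfl⟩

lemma decomp_y (b : ℕ) : PathsTo (0, b+1)
    = (if b = 0 then {[((0:ℕ), (1:ℕ))]} else (∅ : Set (List (ℕ × ℕ)))) ∪ App (0, b) (0, b+1) := by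
  ext l
  rw [Set.mem_union, show (l ∈ PathsTo (0,b+1)) = (l ∈ PathsTo (0,b+1)) from rfl, mem_paths_iff]
  constructor
  · rintro (⟨rfl, hst⟩ | ⟨s, hs, l', hl', rfl⟩)
    · left; rw [st_y] at hst; subst hst; simp
    · rw [step_pred_y] at hs; subst hs; right; exact ⟨l', hl', rfl⟩
  · rintro (hl | ⟨l', hl', rfl⟩)
    · split_ifs at hl with hb
      · subst hb; simp at hl; subst hl; exact Or.inl ⟨rfl, by rw [st_y]⟩
      · simp at hl
    · exact Or.inr ⟨(0,b), (step_pred_y b _).mpr rfl, l', hl', rfl⟩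

lemma decomp_xy (a b : ℕ) : PathsTo (a+1, b+1)
    = (if a = 0 ∧ b = 0 then {[((1:ℕ), (1:ℕ))]} else (∅ : Set (List (ℕ × ℕ))))
      ∪ (App (a, b+1) (a+1, b+1) ∪ (App (a+1, b) (a+1, b+1) ∪ App (a, b) (a+1, b+1))) := by
  ext l
  rw [Set.mem_union, show (l ∈ PathsTo (a+1,b+1)) = (l ∈ PathsTo (a+1,b+1)) from rfl,
    mem_paths_iff]
  constructor
  · rintro (⟨rfl, hst⟩ | ⟨s, hs, l', hl', rfl⟩)
    · left; rw [st_xy] at hst; obtain ⟨ha, hb⟩ := hst; subst ha; subst hb; simp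
    · rw [step_pred_xy] at hs
      rcases hs with rfl | rfl | rfl
      · exact Or.inr (Or.inl ⟨l', hl', rfl⟩)
      · exact Or.inr (Or.inr (Or.inl ⟨l', hl', rfl⟩))
      · exact Or.inr (Or.inr (Or.inr ⟨l', hl', rfl⟩))
  · rintro (hl | (⟨l', hl', rfl⟩ | (⟨l', hl', rfl⟩ | ⟨l', hl', rfl⟩)))
    · split_ifs at hl with hab
      · obtain ⟨ha, hb⟩ := hab; subst ha; subst hb; simp at hl; subst hl
        exact Or.inl ⟨rfl, by rw [st_xy]; exact ⟨rfl, rfl⟩⟩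
      · simp at hl
    · exact Or.inr ⟨(a,b+1), (step_pred_xy a b _).mpr (Or.inl rfl), l', hl', rfl⟩
    · exact Or.inr ⟨(a+1,b), (step_pred_xy a b _).mpr (Or.inr (Or.inl rfl)), l', hl', rfl⟩
    · exact Or.inr ⟨(a,b), (step_pred_xy a b _).mpr (Or.inr (Or.inr rfl)), l', hl', rfl⟩

lemma ite_set_finite {c : Prop} [Decidable c] {x : List (ℕ × ℕ)} :
    (if c then ({x} : Set (List (ℕ × ℕ))) else ∅).Finite := by
  split_ifs <;> simp

lemma ite_set_ncard {c : Prop} [Decidable c] {x : List (ℕ × ℕ)} :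
    (if c then ({x} : Set (List (ℕ × ℕ))) else ∅).ncard = if c then 1 else 0 := by
  split_ifs <;> simp

lemma ite_disj_app {c : Prop} [Decidable c] {x s t : ℕ × ℕ} :
    Disjoint (if c then ({[x]} : Set (List (ℕ × ℕ))) else ∅) (App s t) := by
  split_ifs
  · exact singleton_disj_app
  · simp

lemma paths_main : ∀ N a b, a + b ≤ N →
    (PathsTo (a,b)).Finite ∧ (PathsTo (a,b)).ncard = M a b := by
  intro N
  induction N with
  | zero =>
    intro a b h
    have ha : a = 0 := by omega
    have hb : b = 0 := by omega
    subst ha; subst hb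
    rw [paths00]
    exact ⟨Set.finite_empty, by simp [M]⟩
  | succ N IH =>
    intro a b h
    match a, b with
    | 0, 0 => rw [paths00]; exact ⟨Set.finite_empty, by simp [M]⟩
    | a+1, 0 =>
      obtain ⟨hf, hc⟩ := IH a 0 (by omega)
      rw [decomp_x]
      have hfin : ((if a = 0 then {[((1:ℕ), (0:ℕ))]} else (∅ : Set (List (ℕ × ℕ))))
          ∪ App (a, 0) (a+1, 0)).Finite := ite_set_finite.union (app_finite hf)
      refine ⟨hfin, ?_⟩
      rw [Set.ncard_union_eq ite_disj_app ite_set_finite (app_finite hf), ite_set_ncard,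
        app_ncard, hc]
      cases a <;> simp [M]
    | 0, b+1 =>
      obtain ⟨hf, hc⟩ := IH 0 b (by omega)
      rw [decomp_y]
      have hfin : ((if b = 0 then {[((0:ℕ), (1:ℕ))]} else (∅ : Set (List (ℕ × ℕ))))
          ∪ App (0, b) (0, b+1)).Finite := ite_set_finite.union (app_finite hf)
      refine ⟨hfin, ?_⟩
      rw [Set.ncard_union_eq ite_disj_app ite_set_finite (app_finite hf), ite_set_ncard,
        app_ncard, hc]
      cases b <;> simp [M]
    | a+1, b+1 =>
      obtain ⟨hf1, hc1⟩ := IH a (b+1) (by omega)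
      obtain ⟨hf2, hc2⟩ := IH (a+1) b (by omega)
      obtain ⟨hf3, hc3⟩ := IH a b (by omega)
      rw [decomp_xy]
      have hd23 : Disjoint (App (a+1, b) (a+1,b+1)) (App (a, b) (a+1,b+1)) :=
        app_disj (by simp)
      have hd123 : Disjoint (App (a, b+1) (a+1,b+1))
          (App (a+1, b) (a+1,b+1) ∪ App (a, b) (a+1,b+1)) := by
        rw [Set.disjoint_union_right]
        exact ⟨app_disj (by simp), app_disj (by simp [Prod.ext_iff])⟩
      have hfin23 : (App (a+1, b) (a+1,b+1) ∪ App (a, b) (a+1,b+1)).Finite :=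
        (app_finite hf2).union (app_finite hf3)
      have hfin123 : (App (a, b+1) (a+1,b+1)
          ∪ (App (a+1, b) (a+1,b+1) ∪ App (a, b) (a+1,b+1))).Finite :=
        (app_finite hf1).union hfin23
      have hd0 : Disjoint (if a = 0 ∧ b = 0 then ({[((1:ℕ),(1:ℕ))]} : Set (List (ℕ × ℕ))) else ∅)
          (App (a, b+1) (a+1,b+1) ∪ (App (a+1, b) (a+1,b+1) ∪ App (a, b) (a+1,b+1))) := by
        rw [Set.disjoint_union_right, Set.disjoint_union_right]
        exact ⟨ite_disj_app, ite_disj_app, ite_disj_app⟩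
      refine ⟨ite_set_finite.union hfin123, ?_⟩
      rw [Set.ncard_union_eq hd0 ite_set_finite hfin123,
        Set.ncard_union_eq hd123 (app_finite hf1) hfin23,
        Set.ncard_union_eq hd23 (app_finite hf2) (app_finite hf3),
        ite_set_ncard, app_ncard, app_ncard, app_ncard, hc1, hc2, hc3, M_def]
      ring



variable {G : Type*} [CommGroup G] [Finite G]

lemma sup_eq_top {A B : Subgroup G} (hcop : Nat.Coprime (Nat.card A) (Nat.card B))
    (hmul : Nat.card A * Nat.card B = Nat.card G) : A ⊔ B = ⊤ := by
  have h1 : Nat.card A ∣ Nat.card (A ⊔ B : Subgroup G) := Subgroup.card_dvd_of_le le_sup_left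
  have h2 : Nat.card B ∣ Nat.card (A ⊔ B : Subgroup G) := Subgroup.card_dvd_of_le le_sup_right
  have h3 : Nat.card A * Nat.card B ∣ Nat.card (A ⊔ B : Subgroup G) :=
    hcop.mul_dvd_of_dvd_of_dvd h1 h2
  have h4 : Nat.card (A ⊔ B : Subgroup G) ∣ Nat.card G :=
    Subgroup.card_subgroup_dvd_card _
  exact Subgroup.eq_top_of_card_eq _ (Nat.dvd_antisymm h4 (hmul ▸ h3))

lemma split_infA {A B K L : Subgroup G} (hbot : A ⊓ B = ⊥) (hK : K ≤ A) (hL : L ≤ B) :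
    (K ⊔ L) ⊓ A = K := by
  refine le_antisymm ?_ (le_inf le_sup_left hK)
  rintro x ⟨hx, hxA⟩
  obtain ⟨k, hk, l, hl, rfl⟩ := Subgroup.mem_sup.mp hx
  have hlA : l ∈ A := by
    have : l = k⁻¹ * (k * l) := by group
    rw [this]
    exact A.mul_mem (A.inv_mem (hK hk)) hxA
  have : l ∈ A ⊓ B := ⟨hlA, hL hl⟩
  rw [hbot, Subgroup.mem_bot] at this
  rw [this, mul_one]
  exact hk

lemma split_infB {A B K L : Subgroup G} (hbot : A ⊓ B = ⊥) (hK : K ≤ A) (hL : L ≤ B) :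
    (K ⊔ L) ⊓ B = L := by
  rw [sup_comm]
  exact split_infA (by rw [inf_comm]; exact hbot) hL hK

lemma pow_natcard_eq_one {A : Subgroup G} {a : G} (ha : a ∈ A) : a ^ (Nat.card A) = 1 := by
  have : (⟨a, ha⟩ : A) ^ (Nat.card A) = 1 := pow_card_eq_one'
  have h2 := congrArg (Subtype.val : A → G) this
  rw [SubmonoidClass.coe_pow] at h2
  simpa using h2

lemma recover {A B : Subgroup G} (hcop : Nat.Coprime (Nat.card A) (Nat.card B))
    (htop : A ⊔ B = ⊤) (H : Subgroup G) : (H ⊓ A) ⊔ (H ⊓ B) = H := by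
  refine le_antisymm (sup_le inf_le_left inf_le_left) ?_
  intro x hx
  have hxtop : x ∈ A ⊔ B := by rw [htop]; exact Subgroup.mem_top x
  obtain ⟨a, ha, b, hb, rfl⟩ := Subgroup.mem_sup.mp hxtop
  obtain ⟨u, v, huv⟩ := Nat.isCoprime_iff_coprime.mpr hcop
  set ca : ℤ := (Nat.card A : ℤ)
  set cb : ℤ := (Nat.card B : ℤ)
  have haA : a ^ ca = 1 := by
    rw [zpow_natCast]
    exact_mod_cast pow_natcard_eq_one ha
  have hbB : b ^ cb = 1 := by
    rw [zpow_natCast]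
    exact_mod_cast pow_natcard_eq_one hb
  have key_a : (a * b) ^ (v * cb) = a := by
    rw [mul_zpow]
    have h1 : b ^ (v * cb) = 1 := by rw [mul_comm, zpow_mul, hbB, one_zpow]
    have h2 : a ^ (v * cb) = a := by
      have : v * cb = 1 - u * ca := by linarith [huv]
      rw [this, zpow_sub, zpow_one, mul_comm u ca, zpow_mul, haA, one_zpow, inv_one, mul_one]
    rw [h1, h2, mul_one]
  have key_b : (a * b) ^ (u * ca) = b := by
    rw [mul_zpow]
    have h1 : a ^ (u * ca) = 1 := by rw [mul_comm, zpow_mul, haA, one_zpow]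
    have h2 : b ^ (u * ca) = b := by
      have : u * ca = 1 - v * cb := by linarith [huv]
      rw [this, zpow_sub, zpow_one, mul_comm v cb, zpow_mul, hbB, one_zpow, inv_one, mul_one]
    rw [h1, h2, one_mul]
  have haH : a ∈ H := by rw [← key_a]; exact H.zpow_mem hx _
  have hbH : b ∈ H := by rw [← key_b]; exact H.zpow_mem hx _
  exact Subgroup.mul_mem_sup ⟨haH, ha⟩ ⟨hbH, hb⟩



variable {α : Type*}

lemma head?_destutter' :
    ∀ (l : List α) (a : α), (l.destutter' (· ≠ ·) a).head? = some a
  | [], _ => rfl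
  | b :: l, a => by
    rw [List.destutter'_cons]
    split_ifs with h
    · rfl
    · exact head?_destutter' l a

lemma mem_destutter'_ne :
    ∀ (l : List α) (a x : α), x ∈ a :: l → x ∈ l.destutter' (· ≠ ·) a
  | [], a, x, hx => by simpa using hx
  | b :: l, a, x, hx => by
    rw [List.destutter'_cons]
    split_ifs with h
    · rcases List.mem_cons.mp hx with rfl | hx'
      · exact List.mem_cons_self
      · exact List.mem_cons_of_mem _ (mem_destutter'_ne l b x hx')
    · have hab : a = b := not_not.mp h
      apply mem_destutter'_ne l a x
      rcases List.mem_cons.mp hx with rfl | hx'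
      · exact List.mem_cons_self
      · rcases List.mem_cons.mp hx' with rfl | hx''
        · exact List.mem_cons.mpr (Or.inl hab.symm)
        · exact List.mem_cons_of_mem _ hx''

lemma mem_destutter_ne (l : List α) (x : α) (hx : x ∈ l) :
    x ∈ l.destutter (· ≠ ·) := by
  cases l with
  | nil => simpa using hx
  | cons a l => rw [List.destutter_cons']; exact mem_destutter'_ne l a x hx

lemma infix_destutter' :
    ∀ (l : List α) (a u v : α), u ≠ v → (∃ s t, s ++ u :: v :: t = a :: l) →
      ∃ s t, s ++ u :: v :: t = l.destutter' (· ≠ ·) a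
  | [], a, u, v, huv, ⟨s, t, hst⟩ => by
    have := congrArg List.length hst
    simp at this
    omega
  | b :: l, a, u, v, huv, ⟨s, t, hst⟩ => by
    rcases s with _ | ⟨x, s'⟩
    · simp only [List.nil_append, List.cons.injEq] at hst
      obtain ⟨h1, h2, h3⟩ := hst
      have hab : a ≠ b := by rw [← h1, ← h2]; exact huv
      rw [List.destutter'_cons_pos _ hab]
      obtain ⟨e, hd⟩ : ∃ e, (List.destutter' (· ≠ ·) b l) = b :: e := by
        have hh := head?_destutter' l b
        cases hde : List.destutter' (· ≠ ·) b l with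
        | nil => rw [hde] at hh; simp at hh
        | cons y e =>
          rw [hde] at hh
          simp only [List.head?_cons, Option.some.injEq] at hh
          exact ⟨e, by rw [hh]⟩
      exact ⟨[], e, by rw [hd, h1, h2]; rfl⟩
    · simp only [List.cons_append, List.cons.injEq] at hst
      obtain ⟨rfl, hst⟩ := hst
      rw [List.destutter'_cons]
      split_ifs with h
      · obtain ⟨s'', t'', h2⟩ := infix_destutter' l b u v huv ⟨s', t, hst⟩
        exact ⟨x :: s'', t'', by rw [List.cons_append, h2]⟩
      · push_neg at h
        subst h
        exact infix_destutter' l x u v huv ⟨s', t, hst⟩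

lemma chain'_and {R S : α → α → Prop} :
    ∀ {l : List α}, l.IsChain R → l.IsChain S → l.IsChain (fun a b => R a b ∧ S a b)
  | [], _, _ => by simp
  | [_], _, _ => by simp
  | a :: b :: l, hR, hS => by
    rw [List.isChain_cons_cons] at *
    exact ⟨⟨hR.1, hS.1⟩, chain'_and hR.2 hS.2⟩

lemma chain'_imp_mem {R S : α → α → Prop} :
    ∀ {l : List α}, (∀ a ∈ l, ∀ b ∈ l, R a b → S a b) → l.IsChain R → l.IsChain S
  | [], _, _ => by simp
  | [_], _, _ => by simp
  | a :: b :: l, h, hR => by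
    rw [List.isChain_cons_cons] at *
    refine ⟨h a (by simp) b (by simp) hR.1, chain'_imp_mem ?_ hR.2⟩
    intro x hx y hy hxy
    exact h x (List.mem_cons_of_mem _ hx) y (List.mem_cons_of_mem _ hy) hxy

lemma nat_mem_le_getLast {l : List ℕ} (hc : l.IsChain (fun x y => y = x ∨ y = x + 1)) {z : ℕ}
    (hz : l.getLast? = some z) {x : ℕ} (hx : x ∈ l) : x ≤ z := by
  have hc' : l.IsChain (· ≤ ·) := hc.imp fun _ _ h => by omega
  have hpw : l.Pairwise (· ≤ ·) := List.isChain_iff_pairwise.mp hc'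
  have hne : l ≠ [] := by rintro rfl; simp at hz
  have hdec : l.dropLast ++ [l.getLast hne] = l := List.dropLast_append_getLast hne
  have hzz : z = l.getLast hne := by
    rw [List.getLast?_eq_getLast_of_ne_nil hne] at hz
    exact (Option.some_injective _ hz).symm
  subst hzz
  rcases (by rw [← hdec] at hx; exact List.mem_append.mp hx) with h | h
  · have := (List.pairwise_append.mp (hdec ▸ hpw :
      (l.dropLast ++ [l.getLast hne]).Pairwise _)).2.2
    exact this x h _ (by simp)
  · simp at h; subst h; exact le_rfl

lemma destutter_drop (c : List α) (d : α) (hnd : c.Nodup) :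
    ∀ (rest : List ℕ) (x₀ : ℕ),
      (x₀ :: rest).IsChain (fun x y => y = x ∨ y = x + 1) →
      (x₀ :: rest).getLast? = some (c.length - 1) → x₀ < c.length →
      List.destutter' (· ≠ ·) (c.getD x₀ d) (rest.map (fun k => c.getD k d)) = c.drop x₀
  | [], x₀, hch, hlast, hlt => by
    simp only [List.getLast?_singleton, Option.some.injEq] at hlast
    subst hlast
    rw [List.map_nil, List.destutter'_nil]
    rw [List.drop_eq_getElem_cons hlt, List.getD_eq_getElem _ _ hlt]
    have : c.length - 1 + 1 = c.length := by omega
    rw [this, List.drop_length]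
  | x₁ :: rest, x₀, hch, hlast, hlt => by
    rw [List.isChain_cons_cons] at hch
    obtain ⟨hstep, hch'⟩ := hch
    rw [List.getLast?_cons_cons] at hlast
    have hx₁ : x₁ ≤ c.length - 1 :=
      nat_mem_le_getLast hch' hlast (List.mem_cons_self)
    have hx₁' : x₁ < c.length := by omega
    rcases hstep with rfl | rfl
    · rw [List.map_cons, List.destutter'_cons_neg _ (by simp)]
      exact destutter_drop c d hnd rest x₁ hch' hlast hx₁'
    · have hne : c.getD x₀ d ≠ c.getD (x₀ + 1) d := by
        rw [List.getD_eq_getElem _ _ hlt, List.getD_eq_getElem _ _ hx₁']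
        intro h
        have := List.Nodup.idxOf_getElem hnd _ hlt
        rw [h, List.Nodup.idxOf_getElem hnd _ hx₁'] at this
        omega
      rw [List.map_cons, List.destutter'_cons_pos _ hne,
        destutter_drop c d hnd rest (x₀ + 1) hch' hlast hx₁',
        List.drop_eq_getElem_cons hlt, List.getD_eq_getElem _ _ hlt]



variable {α : Type*}

lemma adj_of_chain' {S : α → α → Prop} :
    ∀ {l : List α}, l.IsChain S → ∀ u v : α, (∃ s t, s ++ u :: v :: t = l) → S u v
  | [], _, u, v, ⟨s, t, hst⟩ => by
    have := congrArg List.length hst; simp at this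
  | [_], _, u, v, ⟨s, t, hst⟩ => by
    have := congrArg List.length hst; simp at this; omega
  | a :: b :: l, h, u, v, ⟨s, t, hst⟩ => by
    rcases s with _ | ⟨x, s'⟩
    · simp only [List.nil_append, List.cons.injEq] at hst
      obtain ⟨h1, h2, _⟩ := hst
      rw [← h1, ← h2] at h
      exact (List.isChain_cons_cons.mp h).1
    · simp only [List.cons_append, List.cons.injEq] at hst
      obtain ⟨_, hst⟩ := hst
      exact adj_of_chain' (List.isChain_cons_cons.mp h).2 u v ⟨s', t, hst⟩

lemma chain'_of_adj {S : α → α → Prop} :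
    ∀ {l : List α}, (∀ u v : α, (∃ s t, s ++ u :: v :: t = l) → S u v) → l.IsChain S
  | [], _ => by simp
  | [_], _ => by simp
  | a :: b :: l, h => by
    rw [List.isChain_cons_cons]
    refine ⟨h a b ⟨[], l, rfl⟩, chain'_of_adj ?_⟩
    intro u v ⟨s, t, hst⟩
    exact h u v ⟨a :: s, t, by rw [List.cons_append, hst]⟩

variable [PartialOrder α] [OrderBot α]

lemma bot_lt_of_chain {l : List α} (hch : l.IsChain (· < ·)) (hhd : l.head? ≠ some ⊥) :
    ∀ x ∈ l, ⊥ < x := by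
  cases l with
  | nil => simp
  | cons a l =>
    have ha : ⊥ < a := by
      rcases eq_or_ne a ⊥ with rfl | h
      · exact (hhd (by rfl)).elim
      · exact bot_lt_iff_ne_bot.mpr h
    intro x hx
    rcases List.mem_cons.mp hx with rfl | hx'
    · exact ha
    · have hpw := List.isChain_iff_pairwise.mp hch
      exact ha.trans ((List.pairwise_cons.mp hpw).1 x hx')

lemma side_analysis {m : List α} (hm : m.IsChain (· ≤ ·)) (hmne : m ≠ [])
    {c : List α} (hbotlt : ∀ x ∈ c, ⊥ < x)
    (hres : (m.destutter (· ≠ ·)).filter (fun H => decide (H ≠ ⊥)) = c) :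
    m.destutter (· ≠ ·) = c ∨ m.destutter (· ≠ ·) = ⊥ :: c := by
  obtain ⟨d, hd⟩ : ∃ d, m.destutter (· ≠ ·) = d := ⟨_, rfl⟩
  rw [hd] at hres ⊢
  have hdne : d.IsChain (· ≠ ·) := hd ▸ List.isChain_destutter _ m
  have hdle : d.IsChain (· ≤ ·) := hm.sublist (hd ▸ List.destutter_sublist _ m)
  have hdlt : d.IsChain (· < ·) :=
    (chain'_and hdle hdne).imp fun _ _ h => lt_of_le_of_ne h.1 h.2
  have hdnil : d ≠ [] := by
    cases m with
    | nil => exact absurd rfl hmne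
    | cons a m' =>
      rw [← hd, List.destutter_cons']
      exact List.destutter'_ne_nil _ _
  obtain ⟨y, d', rfl⟩ : ∃ y d', d = y :: d' := by
    cases d with
    | nil => exact absurd rfl hdnil
    | cons y d' => exact ⟨y, d', rfl⟩
  have hpw := List.isChain_iff_pairwise.mp hdlt
  have hd'ne : ∀ z ∈ d', z ≠ ⊥ := by
    intro z hz
    have hyz : y < z := (List.pairwise_cons.mp hpw).1 z hz
    have : ⊥ ≤ y := bot_le
    exact ne_bot_of_gt (lt_of_le_of_lt this hyz)
  have hfil' : d'.filter (fun H => decide (H ≠ ⊥)) = d' :=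
    List.filter_eq_self.mpr fun a ha => decide_eq_true (hd'ne a ha)
  rcases eq_or_ne y ⊥ with rfl | hy
  · right
    rw [List.filter_cons] at hres
    have hcond : (decide ((⊥:α) ≠ ⊥)) = false := by simp
    rw [hcond] at hres
    simp only [Bool.false_eq_true, if_false] at hres
    rw [hfil'] at hres
    rw [hres]
  · left
    rw [List.filter_cons] at hres
    have hcond : (decide (y ≠ ⊥)) = true := by simp [hy]
    rw [hcond] at hres
    simp only [if_true] at hres
    rw [hfil'] at hres
    rw [hres]


lemma infix_destutter {α : Type*} {l : List α} {u v : α} (huv : u ≠ v)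
    (h : ∃ s t, s ++ u :: v :: t = l) :
    ∃ s t, s ++ u :: v :: t = l.destutter (· ≠ ·) := by
  cases l with
  | nil =>
    obtain ⟨s, t, hst⟩ := h
    have := congrArg List.length hst; simp at this
  | cons a l' =>
    rw [List.destutter_cons']
    exact infix_destutter' l' a u v huv h

lemma idx_adj {α : Type*} :
    ∀ {s : List α} {c t : List α} {u v : α}, c.Nodup → s ++ u :: v :: t = c →
      c.idxOf u = s.length ∧ c.idxOf v = s.length + 1
  | [], c, t, u, v, hnd, h => by
    subst h
    have huv : u ≠ v := by
      simp only [List.nil_append, List.nodup_cons, List.mem_cons] at hnd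
      exact fun he => hnd.1 (Or.inl he)
    constructor
    · rw [show ([] : List α) ++ u :: v :: t = u :: v :: t from rfl,
        List.idxOf_cons_self]; rfl
    · rw [show ([] : List α) ++ u :: v :: t = u :: v :: t from rfl,
        List.idxOf_cons_ne _ huv, List.idxOf_cons_self]; rfl
  | x :: s', c, t, u, v, hnd, h => by
    subst h
    simp only [List.cons_append, List.nodup_cons] at hnd
    obtain ⟨hx, hnd'⟩ := hnd
    have hxu : x ≠ u := fun he => hx (by rw [he]; simp)
    have hxv : x ≠ v := fun he => hx (by rw [he]; simp)
    obtain ⟨h1, h2⟩ := idx_adj (c := s' ++ u :: v :: t) hnd' rfl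
    constructor
    · rw [show (x :: s') ++ u :: v :: t = x :: (s' ++ u :: v :: t) from rfl,
        List.idxOf_cons_ne _ hxu, h1]; rfl
    · rw [show (x :: s') ++ u :: v :: t = x :: (s' ++ u :: v :: t) from rfl,
        List.idxOf_cons_ne _ hxv, h2]; rfl

lemma side {α : Type*} [PartialOrder α] [OrderBot α] {γ m : List α}
    (hγpw : γ.Pairwise (· < ·)) (hγbot : ∀ x ∈ γ, ⊥ < x)
    (hm : m.IsChain (· ≤ ·)) (hmne : m ≠ [])
    (hres : (m.destutter (· ≠ ·)).filter (fun H => decide (H ≠ ⊥)) = γ) :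
    (∀ x ∈ m, x ∈ ((⊥ : α) :: γ)) ∧
    (∀ u v : α, (∃ s t, s ++ u :: v :: t = m) →
      ((⊥ : α) :: γ).idxOf v = ((⊥ : α) :: γ).idxOf u ∨
        ((⊥ : α) :: γ).idxOf v = ((⊥ : α) :: γ).idxOf u + 1) ∧
    (∀ x₀, m.head? = some x₀ →
      (((⊥ : α) :: γ).idxOf x₀ = 0 ∧ x₀ = ⊥) ∨ (((⊥ : α) :: γ).idxOf x₀ = 1 ∧ x₀ ≠ ⊥)) := by
  have hnd : ((⊥ : α) :: γ).Nodup := by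
    rw [List.nodup_cons]
    constructor
    · intro hb; exact absurd rfl (hγbot ⊥ hb).ne
    · exact (hγpw.imp fun h => ne_of_lt h)
  rcases side_analysis hm hmne hγbot hres with hd | hd
  · refine ⟨?_, ?_, ?_⟩
    · intro x hx
      have := mem_destutter_ne m x hx
      rw [hd] at this
      exact List.mem_cons_of_mem _ this
    · intro u v ⟨s, t, hst⟩
      rcases eq_or_ne u v with rfl | huv
      · exact Or.inl rfl
      · obtain ⟨s', t', h'⟩ := infix_destutter huv ⟨s, t, hst⟩
        rw [hd] at h'
        have h'' : ((⊥ : α) :: s') ++ u :: v :: t' = (⊥ : α) :: γ := by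
          rw [List.cons_append, h']
        obtain ⟨h1, h2⟩ := idx_adj hnd h''
        right; rw [h1, h2]
    · intro x₀ hx₀
      obtain ⟨a, m', rfl⟩ : ∃ a m', m = a :: m' := by
        cases m with
        | nil => exact absurd rfl hmne
        | cons a m' => exact ⟨a, m', rfl⟩
      have hax : a = x₀ := by simpa using hx₀
      subst hax
      have hdh : (m'.destutter' (· ≠ ·) a).head? = some a := head?_destutter' m' a
      rw [← List.destutter_cons', hd] at hdh
      obtain ⟨g, γ', rfl⟩ : ∃ g γ', γ = g :: γ' := by
        cases γ with
        | nil => simp at hdh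
        | cons g γ' => exact ⟨g, γ', rfl⟩
      have hag : g = a := by simpa using hdh
      subst hag
      have hanb : g ≠ ⊥ := (hγbot g (List.mem_cons_self)).ne'
      right
      refine ⟨?_, hanb⟩
      rw [List.idxOf_cons_ne _ (Ne.symm hanb), List.idxOf_cons_self]
  · refine ⟨?_, ?_, ?_⟩
    · intro x hx
      have := mem_destutter_ne m x hx
      rw [hd] at this
      exact this
    · intro u v ⟨s, t, hst⟩
      rcases eq_or_ne u v with rfl | huv
      · exact Or.inl rfl
      · obtain ⟨s', t', h'⟩ := infix_destutter huv ⟨s, t, hst⟩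
        rw [hd] at h'
        obtain ⟨h1, h2⟩ := idx_adj hnd h'
        right; rw [h1, h2]
    · intro x₀ hx₀
      obtain ⟨a, m', rfl⟩ : ∃ a m', m = a :: m' := by
        cases m with
        | nil => exact absurd rfl hmne
        | cons a m' => exact ⟨a, m', rfl⟩
      have hax : a = x₀ := by simpa using hx₀
      subst hax
      have hdh : (m'.destutter' (· ≠ ·) a).head? = some a := head?_destutter' m' a
      rw [← List.destutter_cons', hd] at hdh
      have hab : a = ⊥ := by
        simp only [List.head?_cons, Option.some.injEq] at hdh
        exact hdh.symm
      left
      refine ⟨?_, hab⟩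
      rw [hab, List.idxOf_cons_self]

lemma restrict_calc {α : Type*} [PartialOrder α] [OrderBot α] {γ : List α}
    (hbot : ∀ x ∈ γ, x ≠ ⊥) (hnd : ((⊥ : α) :: γ).Nodup)
    {xs : List ℕ} {x₀ : ℕ} (hch : xs.IsChain (fun x y => y = x ∨ y = x + 1))
    (hhd : xs.head? = some x₀) (hx₀ : x₀ ≤ 1) (hlast : xs.getLast? = some γ.length) :
    ((xs.map (fun k => (((⊥ : α) :: γ)).getD k ⊥)).destutter (· ≠ ·)).filter
      (fun H => decide (H ≠ ⊥)) = γ := by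
  obtain ⟨x, rest, rfl⟩ : ∃ x rest, xs = x :: rest := by
    cases xs with
    | nil => simp at hhd
    | cons x rest => exact ⟨x, rest, rfl⟩
  have hxx : x = x₀ := by simpa using hhd
  subst hxx
  have hfil : γ.filter (fun H => decide (H ≠ ⊥)) = γ :=
    List.filter_eq_self.mpr fun a ha => decide_eq_true (hbot a ha)
  have hxle : x ≤ γ.length := nat_mem_le_getLast hch hlast (List.mem_cons_self)
  have hlen : ((⊥ : α) :: γ).length = γ.length + 1 := by simp
  have hxlt : x < ((⊥ : α) :: γ).length := by omega
  have hlast' : (x :: rest).getLast? = some (((⊥ : α) :: γ).length - 1) := by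
    rw [hlen]; simpa using hlast
  have hdrop := destutter_drop ((⊥ : α) :: γ) ⊥ hnd rest x hch hlast' hxlt
  rw [List.map_cons, List.destutter_cons', hdrop]
  interval_cases x
  · rw [List.drop_zero, List.filter_cons]
    have hcond : (decide ((⊥:α) ≠ ⊥)) = false := by simp
    rw [hcond]
    simp only [Bool.false_eq_true, if_false]
    exact hfil
  · rw [show ((⊥ : α) :: γ).drop 1 = γ from rfl]
    exact hfil


noncomputable def decChain {G : Type*} [Group G] (Γ₁ Γ₂ : List (Subgroup G)) (s : ℕ × ℕ) :
    Subgroup G :=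
  ((⊥ : Subgroup G) :: Γ₁).getD s.1 ⊥ ⊔ ((⊥ : Subgroup G) :: Γ₂).getD s.2 ⊥

noncomputable def encChain {G : Type*} [Group G] (A B : Subgroup G)
    (Γ₁ Γ₂ : List (Subgroup G)) (H : Subgroup G) : ℕ × ℕ :=
  (((⊥ : Subgroup G) :: Γ₁).idxOf (H ⊓ A), ((⊥ : Subgroup G) :: Γ₂).idxOf (H ⊓ B))

end Stmt6Combined

open Stmt6Combined in
theorem stmt6 (G : Type*) [CommGroup G] [Finite G] (p q n m : ℕ)
    (hp : p.Prime) (hq : q.Prime) (hpq : p ≠ q) (hn : 1 ≤ n) (hm : 1 ≤ m)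
    (hG : Nat.card G = p ^ n * q ^ m)
    (A B : Subgroup G) (hA : Nat.card A = p ^ n) (hB : Nat.card B = q ^ m)
    (Γ₁ Γ₂ : List (Subgroup G)) (h₁ : ChainIn A Γ₁) (h₂ : ChainIn B Γ₂)
    (i j : ℕ) (hi : Γ₁.length = i) (hj : Γ₂.length = j) (hij : j ≤ i) :
    {Γ : List (Subgroup G) | HChain G Γ ∧
        restrictChain A Γ = Γ₁ ∧ restrictChain B Γ = Γ₂}.ncard
      = ∑ k ∈ Finset.range (j + 1), (i + k).choose i * i.choose (j - k) := by
  obtain ⟨hne₁, hch₁, hlast₁, hhd₁, hle₁⟩ := h₁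
  obtain ⟨hne₂, hch₂, hlast₂, hhd₂, hle₂⟩ := h₂
  have hi1 : 1 ≤ i := by rw [← hi]; exact List.length_pos_iff.mpr hne₁
  have hj1 : 1 ≤ j := by rw [← hj]; exact List.length_pos_iff.mpr hne₂
  have hcop : Nat.Coprime (Nat.card A) (Nat.card B) := by
    rw [hA, hB]; exact Nat.Coprime.pow n m ((Nat.coprime_primes hp hq).mpr hpq)
  have hbot : A ⊓ B = ⊥ := Subgroup.inf_eq_bot_of_coprime hcop
  have htop : A ⊔ B = ⊤ := sup_eq_top hcop (by rw [hA, hB, hG])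
  have hrec : ∀ H : Subgroup G, (H ⊓ A) ⊔ (H ⊓ B) = H := recover hcop htop
  have hpw₁ : Γ₁.Pairwise (· < ·) := List.isChain_iff_pairwise.mp hch₁
  have hpw₂ : Γ₂.Pairwise (· < ·) := List.isChain_iff_pairwise.mp hch₂
  have hbl₁ : ∀ x ∈ Γ₁, ⊥ < x := bot_lt_of_chain hch₁ hhd₁
  have hbl₂ : ∀ x ∈ Γ₂, ⊥ < x := bot_lt_of_chain hch₂ hhd₂
  have hnb₁ : ∀ x ∈ Γ₁, x ≠ ⊥ := fun x hx => (hbl₁ x hx).ne'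
  have hnb₂ : ∀ x ∈ Γ₂, x ≠ ⊥ := fun x hx => (hbl₂ x hx).ne'
  have hpwA : ((⊥ : Subgroup G) :: Γ₁).Pairwise (· < ·) :=
    List.pairwise_cons.mpr ⟨hbl₁, hpw₁⟩
  have hpwB : ((⊥ : Subgroup G) :: Γ₂).Pairwise (· < ·) :=
    List.pairwise_cons.mpr ⟨hbl₂, hpw₂⟩
  have hndA : ((⊥ : Subgroup G) :: Γ₁).Nodup := hpwA.imp fun h => ne_of_lt h
  have hndB : ((⊥ : Subgroup G) :: Γ₂).Nodup := hpwB.imp fun h => ne_of_lt h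
  have hlenA : ((⊥ : Subgroup G) :: Γ₁).length = i + 1 := by simp [hi]
  have hlenB : ((⊥ : Subgroup G) :: Γ₂).length = j + 1 := by simp [hj]
  have hglA : ((⊥ : Subgroup G) :: Γ₁).getLast? = some A := by
    rw [show (⊥ : Subgroup G) :: Γ₁ = [⊥] ++ Γ₁ from rfl,
      List.getLast?_append_of_ne_nil _ hne₁]
    exact hlast₁
  have hglB : ((⊥ : Subgroup G) :: Γ₂).getLast? = some B := by
    rw [show (⊥ : Subgroup G) :: Γ₂ = [⊥] ++ Γ₂ from rfl,
      List.getLast?_append_of_ne_nil _ hne₂]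
    exact hlast₂
  -- pointwise facts about `getD`
  have haVle : ∀ k : ℕ, ((⊥ : Subgroup G) :: Γ₁).getD k ⊥ ≤ A := by
    intro k
    by_cases h : k < ((⊥ : Subgroup G) :: Γ₁).length
    · rw [List.getD_eq_getElem _ _ h]
      rcases List.mem_cons.mp (List.getElem_mem h) with he | hm'
      · rw [he]; exact bot_le
      · exact hle₁ _ hm'
    · rw [List.getD_eq_default _ _ (le_of_not_gt h)]
      exact bot_le
  have hbVle : ∀ k : ℕ, ((⊥ : Subgroup G) :: Γ₂).getD k ⊥ ≤ B := by
    intro k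
    by_cases h : k < ((⊥ : Subgroup G) :: Γ₂).length
    · rw [List.getD_eq_getElem _ _ h]
      rcases List.mem_cons.mp (List.getElem_mem h) with he | hm'
      · rw [he]; exact bot_le
      · exact hle₂ _ hm'
    · rw [List.getD_eq_default _ _ (le_of_not_gt h)]
      exact bot_le
  have hidxA : ∀ k, k < i + 1 →
      ((⊥ : Subgroup G) :: Γ₁).idxOf (((⊥ : Subgroup G) :: Γ₁).getD k ⊥) = k := by
    intro k hk
    have hk' : k < ((⊥ : Subgroup G) :: Γ₁).length := by omega
    rw [List.getD_eq_getElem _ _ hk']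
    exact List.Nodup.idxOf_getElem hndA k hk'
  have hidxB : ∀ k, k < j + 1 →
      ((⊥ : Subgroup G) :: Γ₂).idxOf (((⊥ : Subgroup G) :: Γ₂).getD k ⊥) = k := by
    intro k hk
    have hk' : k < ((⊥ : Subgroup G) :: Γ₂).length := by omega
    rw [List.getD_eq_getElem _ _ hk']
    exact List.Nodup.idxOf_getElem hndB k hk'
  have haVinj : ∀ x y, x < i + 1 → y < i + 1 →
      ((⊥ : Subgroup G) :: Γ₁).getD x ⊥ = ((⊥ : Subgroup G) :: Γ₁).getD y ⊥ → x = y := by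
    intro x y hx hy hxy
    have h1 := hidxA x hx
    rw [hxy, hidxA y hy] at h1
    exact h1.symm
  have hbVinj : ∀ x y, x < j + 1 → y < j + 1 →
      ((⊥ : Subgroup G) :: Γ₂).getD x ⊥ = ((⊥ : Subgroup G) :: Γ₂).getD y ⊥ → x = y := by
    intro x y hx hy hxy
    have h1 := hidxB x hx
    rw [hxy, hidxB y hy] at h1
    exact h1.symm
  have haVlt : ∀ x y, x < y → y < i + 1 →
      ((⊥ : Subgroup G) :: Γ₁).getD x ⊥ < ((⊥ : Subgroup G) :: Γ₁).getD y ⊥ := by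
    intro x y hxy hy
    have hy' : y < ((⊥ : Subgroup G) :: Γ₁).length := by omega
    have hx' : x < ((⊥ : Subgroup G) :: Γ₁).length := by omega
    rw [List.getD_eq_getElem _ _ hx', List.getD_eq_getElem _ _ hy']
    exact List.pairwise_iff_getElem.mp hpwA x y hx' hy' hxy
  have hbVlt : ∀ x y, x < y → y < j + 1 →
      ((⊥ : Subgroup G) :: Γ₂).getD x ⊥ < ((⊥ : Subgroup G) :: Γ₂).getD y ⊥ := by
    intro x y hxy hy
    have hy' : y < ((⊥ : Subgroup G) :: Γ₂).length := by omega
    have hx' : x < ((⊥ : Subgroup G) :: Γ₂).length := by omega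
    rw [List.getD_eq_getElem _ _ hx', List.getD_eq_getElem _ _ hy']
    exact List.pairwise_iff_getElem.mp hpwB x y hx' hy' hxy
  have haVlast : ((⊥ : Subgroup G) :: Γ₁).getD i ⊥ = A := by
    have hi' : i < ((⊥ : Subgroup G) :: Γ₁).length := by omega
    rw [List.getD_eq_getElem _ _ hi']
    have hgl := List.getLast?_eq_getLast_of_ne_nil (l := (⊥ : Subgroup G) :: Γ₁) (by simp)
    rw [hglA] at hgl
    have hlA : A = ((⊥ : Subgroup G) :: Γ₁).getLast (by simp) := by
      exact Option.some_injective _ hgl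
    rw [hlA, List.getLast_eq_getElem]
    congr 1
    omega
  have hbVlast : ((⊥ : Subgroup G) :: Γ₂).getD j ⊥ = B := by
    have hj' : j < ((⊥ : Subgroup G) :: Γ₂).length := by omega
    rw [List.getD_eq_getElem _ _ hj']
    have hgl := List.getLast?_eq_getLast_of_ne_nil (l := (⊥ : Subgroup G) :: Γ₂) (by simp)
    rw [hglB] at hgl
    have hlB : B = ((⊥ : Subgroup G) :: Γ₂).getLast (by simp) := by
      exact Option.some_injective _ hgl
    rw [hlB, List.getLast_eq_getElem]
    congr 1
    omega
  have hidxlastA : ((⊥ : Subgroup G) :: Γ₁).idxOf A = i := by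
    rw [← haVlast]; exact hidxA i (by omega)
  have hidxlastB : ((⊥ : Subgroup G) :: Γ₂).idxOf B = j := by
    rw [← hbVlast]; exact hidxB j (by omega)
  have haV0 : ((⊥ : Subgroup G) :: Γ₁).getD 0 ⊥ = ⊥ := rfl
  have hbV0 : ((⊥ : Subgroup G) :: Γ₂).getD 0 ⊥ = ⊥ := rfl
  have haV1ne : ((⊥ : Subgroup G) :: Γ₁).getD 1 ⊥ ≠ ⊥ := by
    have := haVlt 0 1 (by omega) (by omega)
    rw [haV0] at this
    exact this.ne'
  have hbV1ne : ((⊥ : Subgroup G) :: Γ₂).getD 1 ⊥ ≠ ⊥ := by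
    have := hbVlt 0 1 (by omega) (by omega)
    rw [hbV0] at this
    exact this.ne'
  have hsplitA : ∀ s : ℕ × ℕ, decChain Γ₁ Γ₂ s ⊓ A = ((⊥ : Subgroup G) :: Γ₁).getD s.1 ⊥ :=
    fun s => split_infA hbot (haVle s.1) (hbVle s.2)
  have hsplitB : ∀ s : ℕ × ℕ, decChain Γ₁ Γ₂ s ⊓ B = ((⊥ : Subgroup G) :: Γ₂).getD s.2 ⊥ :=
    fun s => split_infB hbot (haVle s.1) (hbVle s.2)
  -- paths map into the chain set
  have himg : ∀ l ∈ PathsTo (i, j),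
      HChain G (l.map (decChain Γ₁ Γ₂)) ∧ restrictChain A (l.map (decChain Γ₁ Γ₂)) = Γ₁ ∧
        restrictChain B (l.map (decChain Γ₁ Γ₂)) = Γ₂ := by
    rintro l ⟨hlne, hlch, hlhd, hllast⟩
    have hbounds : ∀ s ∈ l, s.1 ≤ i ∧ s.2 ≤ j := fun s hs =>
      mem_le_getLast hlch hllast hs
    obtain ⟨s₀, l', rfl⟩ : ∃ s₀ l', l = s₀ :: l' := by
      cases l with
      | nil => exact absurd rfl hlne
      | cons a b => exact ⟨a, b, rfl⟩
    have hs₀opt : s₀ = ((0 : ℕ), (1 : ℕ)) ∨ s₀ = (1, 0) ∨ s₀ = (1, 1) := by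
      simpa using hlhd
    have hchain : ((s₀ :: l').map (decChain Γ₁ Γ₂)).IsChain (· < ·) := by
      rw [List.isChain_map]
      refine chain'_imp_mem ?_ hlch
      intro s hs t ht hst
      obtain ⟨hs1, hs2⟩ := hbounds s hs
      obtain ⟨ht1, ht2⟩ := hbounds t ht
      have h1 : ((⊥ : Subgroup G) :: Γ₁).getD s.1 ⊥ ≤ ((⊥ : Subgroup G) :: Γ₁).getD t.1 ⊥ := by
        rcases hst.1 with he | he
        · rw [he]
        · rw [he]; exact le_of_lt (haVlt s.1 (s.1 + 1) (by omega) (by omega))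
      have h2 : ((⊥ : Subgroup G) :: Γ₂).getD s.2 ⊥ ≤ ((⊥ : Subgroup G) :: Γ₂).getD t.2 ⊥ := by
        rcases hst.2.1 with he | he
        · rw [he]
        · rw [he]; exact le_of_lt (hbVlt s.2 (s.2 + 1) (by omega) (by omega))
      refine lt_of_le_of_ne (sup_le_sup h1 h2) ?_
      intro he
      have e1 : s.1 = t.1 := by
        have e0 : decChain Γ₁ Γ₂ s ⊓ A = decChain Γ₁ Γ₂ t ⊓ A := by rw [he]
        rw [hsplitA, hsplitA] at e0
        exact haVinj _ _ (by omega) (by omega) e0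
      have e2 : s.2 = t.2 := by
        have e0 : decChain Γ₁ Γ₂ s ⊓ B = decChain Γ₁ Γ₂ t ⊓ B := by rw [he]
        rw [hsplitB, hsplitB] at e0
        exact hbVinj _ _ (by omega) (by omega) e0
      exact hst.2.2 (by rw [Prod.ext_iff]; exact ⟨e1, e2⟩)
    have hheadne : ((s₀ :: l').map (decChain Γ₁ Γ₂)).head? ≠ some ⊥ := by
      simp only [List.map_cons, List.head?_cons, ne_eq, Option.some.injEq]
      intro hbotdec
      rcases hs₀opt with rfl | rfl | rfl
      · apply hbV1ne
        have hd01 : decChain Γ₁ Γ₂ ((0 : ℕ), (1 : ℕ))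
            = ((⊥ : Subgroup G) :: Γ₂).getD 1 ⊥ := by
          show (⊥ : Subgroup G) ⊔ ((⊥ : Subgroup G) :: Γ₂).getD 1 ⊥ = _
          exact bot_sup_eq _
        rw [← hd01]
        exact hbotdec
      · apply haV1ne
        have hd10 : decChain Γ₁ Γ₂ ((1 : ℕ), (0 : ℕ))
            = ((⊥ : Subgroup G) :: Γ₁).getD 1 ⊥ := by
          show ((⊥ : Subgroup G) :: Γ₁).getD 1 ⊥ ⊔ (⊥ : Subgroup G) = _
          exact sup_bot_eq _
        rw [← hd10]
        exact hbotdec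
      · apply haV1ne
        have hle11 : ((⊥ : Subgroup G) :: Γ₁).getD 1 ⊥ ≤ decChain Γ₁ Γ₂ ((1 : ℕ), (1 : ℕ)) :=
          le_sup_left
        rw [hbotdec] at hle11
        exact le_bot_iff.mp hle11
    have hgl : ((s₀ :: l').map (decChain Γ₁ Γ₂)).getLast? = some ⊤ := by
      rw [List.getLast?_map, hllast]
      simp only [Option.map_some]
      congr 1
      show ((⊥ : Subgroup G) :: Γ₁).getD i ⊥ ⊔ ((⊥ : Subgroup G) :: Γ₂).getD j ⊥ = ⊤
      rw [haVlast, hbVlast, htop]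
    have hresA : restrictChain A ((s₀ :: l').map (decChain Γ₁ Γ₂)) = Γ₁ := by
      show ((((s₀ :: l').map (decChain Γ₁ Γ₂)).map (fun H => H ⊓ A)).destutter
        (· ≠ ·)).filter (fun H => decide (H ≠ ⊥)) = Γ₁
      rw [List.map_map]
      have hfe : ((fun H => H ⊓ A) ∘ decChain Γ₁ Γ₂)
          = (fun k => ((⊥ : Subgroup G) :: Γ₁).getD k ⊥) ∘ Prod.fst :=
        funext fun s => hsplitA s
      rw [hfe, ← List.map_map]
      have hcalc := restrict_calc (α := Subgroup G) hnb₁ hndA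
        (xs := (s₀ :: l').map Prod.fst) (x₀ := s₀.1) ?_ ?_ ?_ ?_
      · exact hcalc
      · rw [List.isChain_map]; exact hlch.imp fun _ _ h => h.1
      · simp
      · rcases hs₀opt with rfl | rfl | rfl <;> simp
      · rw [List.getLast?_map, hllast]
        simp [hi]
    have hresB : restrictChain B ((s₀ :: l').map (decChain Γ₁ Γ₂)) = Γ₂ := by
      show ((((s₀ :: l').map (decChain Γ₁ Γ₂)).map (fun H => H ⊓ B)).destutter
        (· ≠ ·)).filter (fun H => decide (H ≠ ⊥)) = Γ₂
      rw [List.map_map]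
      have hfe : ((fun H => H ⊓ B) ∘ decChain Γ₁ Γ₂)
          = (fun k => ((⊥ : Subgroup G) :: Γ₂).getD k ⊥) ∘ Prod.snd :=
        funext fun s => hsplitB s
      rw [hfe, ← List.map_map]
      have hcalc := restrict_calc (α := Subgroup G) hnb₂ hndB
        (xs := (s₀ :: l').map Prod.snd) (x₀ := s₀.2) ?_ ?_ ?_ ?_
      · exact hcalc
      · rw [List.isChain_map]; exact hlch.imp fun _ _ h => h.2.1
      · simp
      · rcases hs₀opt with rfl | rfl | rfl <;> simp
      · rw [List.getLast?_map, hllast]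
        simp [hj]
    exact ⟨⟨⟨by simp, hchain, hgl⟩, hheadne⟩, hresA, hresB⟩
  -- the set equality
  have hmain : {Γ : List (Subgroup G) | HChain G Γ ∧
      restrictChain A Γ = Γ₁ ∧ restrictChain B Γ = Γ₂}
      = (fun l : List (ℕ × ℕ) => l.map (decChain Γ₁ Γ₂)) '' PathsTo (i, j) := by
    apply Set.Subset.antisymm
    · rintro Γ ⟨⟨⟨hgne, hgch, hglast⟩, hghd⟩, hres₁, hres₂⟩
      have hmA : (Γ.map (fun H => H ⊓ A)).IsChain (· ≤ ·) := by
        rw [List.isChain_map]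
        exact (show Γ.IsChain (· < ·) from hgch).imp fun _ _ h => inf_le_inf_right A (le_of_lt h)
      have hmB : (Γ.map (fun H => H ⊓ B)).IsChain (· ≤ ·) := by
        rw [List.isChain_map]
        exact (show Γ.IsChain (· < ·) from hgch).imp fun _ _ h => inf_le_inf_right B (le_of_lt h)
      have hmAne : Γ.map (fun H => H ⊓ A) ≠ [] := by simpa using hgne
      have hmBne : Γ.map (fun H => H ⊓ B) ≠ [] := by simpa using hgne
      obtain ⟨memA, adjA, headA⟩ := side hpw₁ hbl₁ hmA hmAne hres₁
      obtain ⟨memB, adjB, headB⟩ := side hpw₂ hbl₂ hmB hmBne hres₂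
      obtain ⟨H₀, Γ', rfl⟩ : ∃ H₀ Γ', Γ = H₀ :: Γ' := by
        cases Γ with
        | nil => exact absurd rfl hgne
        | cons a b => exact ⟨a, b, rfl⟩
      refine ⟨(H₀ :: Γ').map (encChain A B Γ₁ Γ₂), ⟨?_, ?_, ?_, ?_⟩, ?_⟩
      · simp
      · rw [List.isChain_map]
        refine chain'_of_adj ?_
        rintro H H' ⟨s, t, hst⟩
        have hlt : H < H' := adj_of_chain' hgch H H' ⟨s, t, hst⟩
        have hHmem : H ∈ H₀ :: Γ' := by rw [← hst]; simp
        have hH'mem : H' ∈ H₀ :: Γ' := by rw [← hst]; simp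
        have hadjA := adjA (H ⊓ A) (H' ⊓ A)
          ⟨s.map (fun H => H ⊓ A), t.map (fun H => H ⊓ A), by rw [← hst]; simp⟩
        have hadjB := adjB (H ⊓ B) (H' ⊓ B)
          ⟨s.map (fun H => H ⊓ B), t.map (fun H => H ⊓ B), by rw [← hst]; simp⟩
        refine ⟨hadjA, hadjB, ?_⟩
        intro he
        have e1 : H ⊓ A = H' ⊓ A := by
          have hm1 : H ⊓ A ∈ (⊥ : Subgroup G) :: Γ₁ :=
            memA _ (List.mem_map_of_mem hHmem)
          have hm2 : H' ⊓ A ∈ (⊥ : Subgroup G) :: Γ₁ :=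
            memA _ (List.mem_map_of_mem hH'mem)
          exact (List.idxOf_inj hm1).mp (congrArg Prod.fst he)
        have e2 : H ⊓ B = H' ⊓ B := by
          have hm1 : H ⊓ B ∈ (⊥ : Subgroup G) :: Γ₂ :=
            memB _ (List.mem_map_of_mem hHmem)
          have hm2 : H' ⊓ B ∈ (⊥ : Subgroup G) :: Γ₂ :=
            memB _ (List.mem_map_of_mem hH'mem)
          exact (List.idxOf_inj hm1).mp (congrArg Prod.snd he)
        have : H = H' := by rw [← hrec H, ← hrec H', e1, e2]
        exact hlt.ne this
      · have hA0 := headA (H₀ ⊓ A) (by simp)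
        have hB0 := headB (H₀ ⊓ B) (by simp)
        have hnb0 : ¬(H₀ ⊓ A = ⊥ ∧ H₀ ⊓ B = ⊥) := by
          rintro ⟨u1, u2⟩
          apply hghd
          have hH0 : H₀ = ⊥ := by rw [← hrec H₀, u1, u2, bot_sup_eq]
          simp [hH0]
        simp only [List.map_cons, List.head?_cons]
        rcases hA0 with ⟨ia0, ha0⟩ | ⟨ia1, _⟩ <;> rcases hB0 with ⟨ib0, hb0⟩ | ⟨ib1, _⟩
        · exact absurd ⟨ha0, hb0⟩ hnb0
        · left; simp [encChain, Prod.ext_iff, ia0, ib1]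
        · right; left; simp [encChain, Prod.ext_iff, ia1, ib0]
        · right; right; simp [encChain, Prod.ext_iff, ia1, ib1]
      · rw [List.getLast?_map, hglast]
        simp only [Option.map_some]
        congr 1
        show (((⊥ : Subgroup G) :: Γ₁).idxOf ((⊤ : Subgroup G) ⊓ A),
          ((⊥ : Subgroup G) :: Γ₂).idxOf ((⊤ : Subgroup G) ⊓ B)) = (i, j)
        rw [top_inf_eq, top_inf_eq, hidxlastA, hidxlastB]
      · show ((H₀ :: Γ').map (encChain A B Γ₁ Γ₂)).map (decChain Γ₁ Γ₂) = H₀ :: Γ'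
        rw [List.map_map]
        have hpt : ∀ H ∈ H₀ :: Γ', (decChain Γ₁ Γ₂ ∘ encChain A B Γ₁ Γ₂) H = id H := by
          intro H hH
          have hmA' : H ⊓ A ∈ (⊥ : Subgroup G) :: Γ₁ :=
            memA _ (List.mem_map_of_mem hH)
          have hmB' : H ⊓ B ∈ (⊥ : Subgroup G) :: Γ₂ :=
            memB _ (List.mem_map_of_mem hH)
          show ((⊥ : Subgroup G) :: Γ₁).getD
              (((⊥ : Subgroup G) :: Γ₁).idxOf (H ⊓ A)) ⊥
            ⊔ ((⊥ : Subgroup G) :: Γ₂).getD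
              (((⊥ : Subgroup G) :: Γ₂).idxOf (H ⊓ B)) ⊥ = H
          rw [List.getD_eq_getElem _ _ (List.idxOf_lt_length_iff.mpr hmA'),
            List.getD_eq_getElem _ _ (List.idxOf_lt_length_iff.mpr hmB'),
            List.getElem_idxOf, List.getElem_idxOf, hrec]
        rw [List.map_congr_left hpt, List.map_id]
    · rintro Γ ⟨l, hl, rfl⟩
      exact himg l hl
  -- injectivity
  have hinj : Set.InjOn (fun l : List (ℕ × ℕ) => l.map (decChain Γ₁ Γ₂)) (PathsTo (i, j)) := by
    have key : ∀ l ∈ PathsTo (i, j),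
        (l.map (decChain Γ₁ Γ₂)).map (encChain A B Γ₁ Γ₂) = l := by
      rintro l ⟨hlne, hlch, hlhd, hllast⟩
      rw [List.map_map]
      have hpt : ∀ s ∈ l, (encChain A B Γ₁ Γ₂ ∘ decChain Γ₁ Γ₂) s = id s := by
        intro s hs
        obtain ⟨hs1, hs2⟩ := mem_le_getLast hlch hllast hs
        show (((⊥ : Subgroup G) :: Γ₁).idxOf (decChain Γ₁ Γ₂ s ⊓ A),
          ((⊥ : Subgroup G) :: Γ₂).idxOf (decChain Γ₁ Γ₂ s ⊓ B)) = s
        rw [hsplitA, hsplitB, hidxA s.1 (by omega), hidxB s.2 (by omega)]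
      rw [List.map_congr_left hpt, List.map_id]
    intro l₁ h₁' l₂ h₂' he
    have hk := key l₁ h₁'
    simp only at he
    rw [he, key l₂ h₂'] at hk
    exact hk.symm
  rw [hmain, Set.ncard_image_of_injOn hinj, (paths_main (i + j) i j le_rfl).2,
    ← F_eq_M i j hi1 hj1]
  rfl
end

section
/- Let p be a prime, n ≥ 1, and G = Z_p^n an elementary abelian p-group of order p^n (e.g., the n-fold direct product of Z/pZ). Then h_1(G) = 1, and for 2 ≤ k ≤ n, h_k(G) = ∑_{1 ≤ i₁ < i₂ < ⋯ < i_{k−1} ≤ n−1} [n choose i_{k−1}]_p · [i_{k−1} choose i_{k−2}]_p ⋯ [i₂ choose i₁]_p, where [a choose b]_p denotes the Gaussian binomial coefficient. -/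
open scoped Classical

/-- `h_k(G)`: the number of proper subgroup chains of `G` ending in `G` with
exactly `k` terms and nontrivial initial term. -/
noncomputable def hChainsLen (G : Type*) [Group G] (k : ℕ) : ℕ :=
  {l : List (Subgroup G) | HChain G l ∧ l.length = k}.ncard

/-- The Gaussian binomial coefficient
`[a choose b]_p = ((p^a−1)(p^{a−1}−1)⋯(p^{a−b+1}−1)) / ((p^b−1)(p^{b−1}−1)⋯(p−1))`. -/
def gaussBinom (p a b : ℕ) : ℕ :=
  (∏ t ∈ Finset.range b, (p ^ (a - t) - 1)) / ∏ t ∈ Finset.range b, (p ^ (b - t) - 1)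

/-- For a list `[i₁, i₂, …, i_r]`, the product
`[i₂ choose i₁]_p · [i₃ choose i₂]_p ⋯ [i_r choose i_{r−1}]_p`. -/
def chainProd (p : ℕ) : List ℕ → ℕ
  | [] => 1
  | [_] => 1
  | a :: b :: rest => gaussBinom p b a * chainProd p (b :: rest)

open Module

universe u
variable {p : ℕ} [Fact p.Prime]

instance fin_submodule {V : Type u} [AddCommGroup V] [Module (ZMod p) V] [Finite V] :
    Finite (Submodule (ZMod p) V) :=
  Finite.of_injective (fun W => (W : Set V)) SetLike.coe_injective

lemma card_module (V : Type u) [AddCommGroup V] [Module (ZMod p) V] [Finite V] :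
    Nat.card V = p ^ Module.finrank (ZMod p) V := by
  have : Fintype V := Fintype.ofFinite V
  rw [Nat.card_eq_fintype_card, card_eq_pow_finrank (K := ZMod p), ZMod.card]

lemma natCard_sigma {ι : Type*} [Fintype ι] (f : ι → Type*) [∀ i, Finite (f i)] :
    Nat.card (Σ i, f i) = ∑ i, Nat.card (f i) := by
  letI : ∀ i, Fintype (f i) := fun i => Fintype.ofFinite _
  rw [Nat.card_eq_fintype_card, Fintype.card_sigma]
  exact Finset.sum_congr rfl (fun i _ => (Nat.card_eq_fintype_card).symm)

lemma card_ne_zero (V : Type u) [AddCommGroup V] [Module (ZMod p) V] [Finite V] :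
    Nat.card {v : V // v ≠ 0} = p ^ Module.finrank (ZMod p) V - 1 := by
  have : Fintype V := Fintype.ofFinite V
  rw [Nat.card_eq_fintype_card, ← card_module (p := p) V, Nat.card_eq_fintype_card]
  classical
  have := Fintype.card_subtype_compl (fun v : V => v = 0)
  simpa [Fintype.card_subtype_eq] using this

lemma finrank_comap_mkQ {V : Type u} [AddCommGroup V] [Module (ZMod p) V] [Finite V]
    (L : Submodule (ZMod p) V) (W' : Submodule (ZMod p) (V ⧸ L)) :
    finrank (ZMod p) (W'.comap L.mkQ) = finrank (ZMod p) W' + finrank (ZMod p) L := by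
  set U := W'.comap L.mkQ with hU
  have hLU : L ≤ U := by
    intro x hx
    show L.mkQ x ∈ W'
    have : L.mkQ x = 0 := (Submodule.Quotient.mk_eq_zero L).2 hx
    rw [this]; exact W'.zero_mem
  set φ : U →ₗ[ZMod p] V ⧸ L := L.mkQ ∘ₗ U.subtype with hφ
  have hrange : LinearMap.range φ = W' := by
    rw [hφ, LinearMap.range_comp, Submodule.range_subtype,
      Submodule.map_comap_eq_of_surjective (Submodule.mkQ_surjective L)]
  have hker : LinearMap.ker φ = L.comap U.subtype := by
    rw [hφ, LinearMap.ker_comp, Submodule.ker_mkQ]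
  have h1 := LinearMap.finrank_range_add_finrank_ker φ
  rw [hrange, hker] at h1
  rw [(Submodule.comapSubtypeEquivOfLe hLU).finrank_eq] at h1
  exact h1.symm

def Np (p a b : ℕ) : ℕ := ∏ t ∈ Finset.range b, (p ^ (a - t) - 1)

lemma Np_succ (p a b : ℕ) : Np p a (b + 1) = Np p (a - 1) b * (p ^ a - 1) := by
  rw [Np, Finset.prod_range_succ']
  simp only [Nat.sub_zero, Np]
  congr 1
  exact Finset.prod_congr rfl fun t _ => by congr 2; omega

lemma count_dim (b : ℕ) :
    ∀ (V : Type u) [AddCommGroup V] [Module (ZMod p) V] [Finite V],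
      b ≤ finrank (ZMod p) V →
      Nat.card {W : Submodule (ZMod p) V // finrank (ZMod p) W = b} * Np p b b
        = Np p (finrank (ZMod p) V) b := by
  induction b with
  | zero =>
    intro V _ _ _ _
    have h1 : Nat.card {W : Submodule (ZMod p) V // finrank (ZMod p) W = 0} = 1 := by
      rw [Nat.card_eq_one_iff_unique]
      constructor
      · constructor
        intro ⟨W, hW⟩ ⟨W', hW'⟩
        have : W = ⊥ := Submodule.finrank_eq_zero.1 hW
        have : W' = ⊥ := Submodule.finrank_eq_zero.1 hW'
        subst_vars; rfl
      · exact ⟨⊥, finrank_bot _ _⟩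
    simp [h1, Np]
  | succ b ih =>
    intro V _ _ _ hb
    set a := finrank (ZMod p) V with ha
    set T := {x : V × Submodule (ZMod p) V // x.1 ∈ x.2 ∧ x.1 ≠ 0 ∧ finrank (ZMod p) x.2 = b + 1}
      with hT
    letI : Fintype V := Fintype.ofFinite V
    letI : Fintype (Submodule (ZMod p) V) := Fintype.ofFinite _
    -- count 1
    have e1 : T ≃ Σ (W : {W : Submodule (ZMod p) V // finrank (ZMod p) W = b + 1}),
        {v : V // v ∈ W.1 ∧ v ≠ 0} :=
      { toFun := fun x => ⟨⟨x.1.2, x.2.2.2⟩, ⟨x.1.1, x.2.1, x.2.2.1⟩⟩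
        invFun := fun x => ⟨(x.2.1, x.1.1), x.2.2.1, x.2.2.2, x.1.2⟩
        left_inv := fun x => rfl
        right_inv := fun x => rfl }
    have count1 : Nat.card T
        = Nat.card {W : Submodule (ZMod p) V // finrank (ZMod p) W = b + 1}
          * (p ^ (b + 1) - 1) := by
      rw [Nat.card_congr e1, natCard_sigma]
      rw [Finset.sum_congr rfl (fun (W : {W : Submodule (ZMod p) V //
          finrank (ZMod p) W = b + 1}) _ => ?_), Finset.sum_const, smul_eq_mul,
        Nat.card_eq_fintype_card]
      · rfl
      · -- fiber card
        have e : {v : V // v ∈ W.1 ∧ v ≠ 0} ≃ {w : W.1 // w ≠ 0} :=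
          { toFun := fun v => ⟨⟨v.1, v.2.1⟩, by
              simp only [ne_eq, Submodule.mk_eq_zero]; exact v.2.2⟩
            invFun := fun w => ⟨w.1.1, w.1.2, by
              simpa [Submodule.coe_eq_zero] using w.2⟩
            left_inv := fun v => rfl
            right_inv := fun w => rfl }
        rw [Nat.card_congr e, card_ne_zero (p := p) W.1, W.2]
    -- count 2
    have e2 : T ≃ Σ (v : {v : V // v ≠ 0}),
        {W : Submodule (ZMod p) V // v.1 ∈ W ∧ finrank (ZMod p) W = b + 1} :=
      { toFun := fun x => ⟨⟨x.1.1, x.2.2.1⟩, ⟨x.1.2, x.2.1, x.2.2.2⟩⟩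
        invFun := fun x => ⟨(x.1.1, x.2.1), x.2.2.1, x.1.2, x.2.2.2⟩
        left_inv := fun x => rfl
        right_inv := fun x => rfl }
    have fiber2 : ∀ v : V, v ≠ 0 →
        Nat.card {W : Submodule (ZMod p) V // v ∈ W ∧ finrank (ZMod p) W = b + 1} * Np p b b
          = Np p (a - 1) b := by
      intro v hv
      set L := Submodule.span (ZMod p) {v} with hL
      have hL1 : finrank (ZMod p) L = 1 := finrank_span_singleton hv
      have hq : finrank (ZMod p) (V ⧸ L) = a - 1 := by
        have := Submodule.finrank_quotient_add_finrank L
        omega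
      have hrk : ∀ W' : Submodule (ZMod p) (V ⧸ L),
          finrank (ZMod p) (W'.comap L.mkQ) = finrank (ZMod p) W' + 1 := by
        intro W'
        rw [finrank_comap_mkQ (p := p) L W', hL1]
      have e3 : {W : Submodule (ZMod p) V // v ∈ W ∧ finrank (ZMod p) W = b + 1}
          ≃ {W' : Submodule (ZMod p) (V ⧸ L) // finrank (ZMod p) W' = b} := by
        have eAB : {W : Submodule (ZMod p) V // v ∈ W ∧ finrank (ZMod p) W = b + 1}
            ≃ {x : {q : Submodule (ZMod p) V // L ≤ q} // finrank (ZMod p) x.1 = b + 1} :=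
          { toFun := fun W => ⟨⟨W.1, (Submodule.span_singleton_le_iff_mem v _).2 W.2.1⟩, W.2.2⟩
            invFun := fun x => ⟨x.1.1, x.1.2 (Submodule.mem_span_singleton_self v), x.2⟩
            left_inv := fun W => rfl
            right_inv := fun x => rfl }
        have eCB : {W' : Submodule (ZMod p) (V ⧸ L) // finrank (ZMod p) W' = b}
            ≃ {x : {q : Submodule (ZMod p) V // L ≤ q} // finrank (ZMod p) x.1 = b + 1} := by
          refine (Submodule.comapMkQRelIso L).toEquiv.subtypeEquiv fun W' => ?_
          have h1 : ((((Submodule.comapMkQRelIso L).toEquiv W') : {q : Submodule (ZMod p) V // L ≤ q}) : Submodule (ZMod p) V) = W'.comap L.mkQ := rfl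
          rw [h1, hrk W']
          omega
        exact eAB.trans eCB.symm
      rw [Nat.card_congr e3]
      have := ih (V ⧸ L) (by omega)
      rw [hq] at this
      exact this
    have count2 : Nat.card T * Np p b b = (p ^ a - 1) * Np p (a - 1) b := by
      rw [Nat.card_congr e2, natCard_sigma, Finset.sum_mul]
      rw [Finset.sum_congr rfl (fun (v : {v : V // v ≠ 0}) _ => fiber2 v.1 v.2),
        Finset.sum_const, smul_eq_mul, Finset.card_univ, ← Nat.card_eq_fintype_card,
        card_ne_zero (p := p) V]
    rw [Np_succ p (b+1) b, Np_succ p a b]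
    simp only [Nat.add_sub_cancel]
    calc Nat.card {W : Submodule (ZMod p) V // finrank (ZMod p) W = b + 1}
          * (Np p b b * (p ^ (b+1) - 1))
        = Nat.card T * Np p b b := by rw [count1]; ring
      _ = Np p (a - 1) b * (p ^ a - 1) := by rw [count2]; ring

lemma Np_pos {p : ℕ} (hp : 2 ≤ p) (b : ℕ) : 0 < Np p b b := by
  apply Finset.prod_pos
  intro t ht
  simp only [Finset.mem_range] at ht
  have h1 : 1 ≤ b - t := by omega
  have : p ^ 1 ≤ p ^ (b - t) := Nat.pow_le_pow_right (by omega) h1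
  simp at this; omega

lemma gauss_eq {p a b N : ℕ} (hp : 2 ≤ p) (h : N * Np p b b = Np p a b) :
    gaussBinom p a b = N := by
  have := Np_pos hp b
  show Np p a b / Np p b b = N
  rw [← h, Nat.mul_div_cancel _ this]

-- generic helpers
lemma chain_le_getLast {α : Type*} [Preorder α] :
    ∀ (l : List α), l.Chain' (· < ·) → ∀ x ∈ l, ∀ y, l.getLast? = some y → x ≤ y
  | [], _, x, hx, _, _ => absurd hx (List.not_mem_nil)
  | [a], _, x, hx, y, hy => by
      simp at hx hy; subst hx; subst hy; rfl
  | a :: b :: t, hc, x, hx, y, hy => by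
      have hc' : (b :: t).Chain' (· < ·) := hc.tail
      have hab : a < b := List.isChain_cons_cons.1 hc |>.1
      have hy' : (b :: t).getLast? = some y := by
        rwa [List.getLast?_cons_cons] at hy
      rcases List.mem_cons.1 hx with rfl | hx'
      · exact le_of_lt (lt_of_lt_of_le hab
          (chain_le_getLast (b :: t) hc' b (List.mem_cons_self) y hy'))
      · exact chain_le_getLast (b :: t) hc' x hx' y hy'

def MC {α : Type*} [Preorder α] [OrderTop α] [OrderBot α] (l : List α) : Prop :=
  (l ≠ [] ∧ l.Chain' (· < ·) ∧ l.getLast? = some ⊤) ∧ l.head? ≠ some (⊥ : α)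

lemma MC_map_iff {α β : Type*} [PartialOrder α] [PartialOrder β]
    [OrderTop α] [OrderBot α] [OrderTop β] [OrderBot β]
    (e : α ≃o β) (l : List α) : MC (l.map e) ↔ MC l := by
  unfold MC List.Chain'
  rw [List.isChain_map, List.getLast?_map, List.head?_map]
  constructor
  · rintro ⟨⟨h1, h2, h3⟩, h4⟩
    refine ⟨⟨by simpa using h1, ?_, ?_⟩, ?_⟩
    · exact h2.imp (fun a b h => by simpa using h)
    · rcases Option.map_eq_some_iff.1 h3 with ⟨a, ha, hea⟩
      rw [ha]; congr
      have : e a = e ⊤ := by rw [hea, e.map_top]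
      exact e.injective this
    · intro hcon
      apply h4
      rw [hcon]
      simp [e.map_bot]
  · rintro ⟨⟨h1, h2, h3⟩, h4⟩
    refine ⟨⟨by simpa using h1, ?_, ?_⟩, ?_⟩
    · exact h2.imp (fun a b h => by simpa using h)
    · rw [h3]; simp [e.map_top]
    · intro hcon
      rcases Option.map_eq_some_iff.1 hcon with ⟨a, ha, hea⟩
      have : a = ⊥ := e.injective (by rw [hea, e.map_bot])
      exact h4 (by rw [ha, this])

lemma card_MC_map {α β : Type*} [PartialOrder α] [PartialOrder β]
    [OrderTop α] [OrderBot α] [OrderTop β] [OrderBot β]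
    (e : α ≃o β) (k : ℕ) :
    Nat.card {l : List α // MC l ∧ l.length = k}
      = Nat.card {l : List β // MC l ∧ l.length = k} := by
  apply Nat.card_congr
  refine Equiv.subtypeEquiv (Equiv.listEquivOfEquiv e.toEquiv) fun l => ?_
  have h1 : Equiv.listEquivOfEquiv e.toEquiv l = l.map e := rfl
  rw [h1, MC_map_iff e l, List.length_map]

lemma sort_insert_max (s : Finset ℕ) (i : ℕ) (h : ∀ x ∈ s, x < i) :
    (insert i s).sort (· ≤ ·) = s.sort (· ≤ ·) ++ [i] := by
  have hi : i ∉ s := fun hin => lt_irrefl i (h i hin)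
  have p : List.Perm ((insert i s).sort (· ≤ ·)) (s.sort (· ≤ ·) ++ [i]) :=
    ((insert i s).sort_perm_toList _).trans ((Finset.toList_insert hi).trans
      ((List.Perm.cons i (s.sort_perm_toList _).symm).trans
        (List.perm_append_singleton i _).symm))
  have hs : List.Pairwise (· ≤ ·) (s.sort (· ≤ ·) ++ [i]) := by
    rw [List.pairwise_append]
    refine ⟨s.pairwise_sort (· ≤ ·), List.pairwise_singleton _ i, fun x hx y hy => ?_⟩
    simp only [List.mem_singleton] at hy
    subst hy
    exact le_of_lt (h x ((Finset.mem_sort (· ≤ ·)).1 hx))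
  exact List.Perm.eq_of_pairwise' ((insert i s).pairwise_sort _) hs p

lemma chainProd_concat (p : ℕ) (i N : ℕ) :
    ∀ (l : List ℕ), chainProd p ((l ++ [i]) ++ [N]) = gaussBinom p N i * chainProd p (l ++ [i])
  | [] => by simp [chainProd]
  | [a] => by simp [chainProd]; ring
  | a :: b :: t => by
      have ih := chainProd_concat p i N (b :: t)
      show chainProd p (a :: b :: (t ++ [i] ++ [N])) = _
      show _ = gaussBinom p N i * chainProd p (a :: b :: (t ++ [i]))
      rw [chainProd, chainProd]
      rw [show (b :: (t ++ [i] ++ [N])) = (b :: t ++ [i] ++ [N]) by simp,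
        show (b :: (t ++ [i])) = (b :: t ++ [i]) by simp, ih]
      ring

lemma finite_lists {X : Type*} [Finite X] (P : List X → Prop) (k : ℕ) :
    Finite {l : List X // P l ∧ l.length = k} := by
  have : Fintype X := Fintype.ofFinite X
  refine Finite.of_injective (fun l => (fun i : Fin k => l.1[i.1]?)) ?_
  intro a b h
  apply Subtype.ext
  apply List.ext_getElem?
  intro n
  by_cases hn : n < k
  · exact congrFun h ⟨n, hn⟩
  · rw [List.getElem?_eq_none (by rw [a.2.2]; omega), List.getElem?_eq_none (by rw [b.2.2]; omega)]

section ChainStep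
variable {V : Type u} [AddCommGroup V] [Module (ZMod p) V] [Finite V]

lemma eW_lt_iff (W : Submodule (ZMod p) V) {a b : Submodule (ZMod p) W} :
    a.map W.subtype < b.map W.subtype ↔ a < b :=
  (Submodule.MapSubtype.orderEmbedding W).lt_iff_lt

lemma MC_append_top (W : Submodule (ZMod p) V) (hW : W < ⊤)
    (c : List (Submodule (ZMod p) W)) (hc : MC c) :
    MC ((c.map (fun U => U.map W.subtype)) ++ [(⊤ : Submodule (ZMod p) V)]) := by
  obtain ⟨⟨hne, hch, hlast⟩, hhead⟩ := hc
  have hmapne : c.map (fun U => U.map W.subtype) ≠ [] := by simpa using hne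
  refine ⟨⟨by simp, ?_, ?_⟩, ?_⟩
  · simp only [List.Chain', List.isChain_append]
    refine ⟨?_, List.isChain_singleton _, ?_⟩
    · rw [List.isChain_map]
      exact hch.imp (fun a b h => (eW_lt_iff W).2 h)
    · intro x hx y hy
      simp only [List.head?_cons, Option.mem_def, Option.some.injEq] at hy
      subst hy
      rw [List.getLast?_map, Option.mem_def, Option.map_eq_some_iff] at hx
      rcases hx with ⟨a, ha, rfl⟩
      rw [hlast] at ha
      cases ha
      rw [Submodule.map_subtype_top]
      exact hW
  · rw [List.getLast?_concat]
  · rw [List.head?_append_of_ne_nil _ hmapne, List.head?_map]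
    intro hcon
    rcases Option.map_eq_some_iff.1 hcon with ⟨a, ha, hea⟩
    have : a = ⊥ := by
      have hinj := Submodule.map_injective_of_injective
        (show Function.Injective W.subtype from Subtype.val_injective)
      exact hinj (show a.map W.subtype = Submodule.map W.subtype ⊥ by
        rw [hea, Submodule.map_bot])
    exact hhead (by rw [ha, this])

end ChainStep

set_option maxHeartbeats 2000000 in
lemma chain_count : ∀ (k : ℕ), 1 ≤ k →
    ∀ (V : Type u) [AddCommGroup V] [Module (ZMod p) V] [Finite V],
      1 ≤ finrank (ZMod p) V →
      Nat.card {l : List (Submodule (ZMod p) V) // MC l ∧ l.length = k}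
        = ∑ s ∈ (Finset.Icc 1 (finrank (ZMod p) V - 1)).powersetCard (k - 1),
            chainProd p (s.sort (· ≤ ·) ++ [finrank (ZMod p) V]) := by
  intro k
  induction k with
  | zero => omega
  | succ m ih =>
    intro _ V _ _ _ hV
    set n := finrank (ZMod p) V with hn
    rcases Nat.eq_zero_or_pos m with rfl | hm
    · -- base case k = 1
      have hnt : Nontrivial V := Module.nontrivial_of_finrank_pos (R := ZMod p) (by omega)
      have hbt : (⊥ : Submodule (ZMod p) V) ≠ ⊤ := by
        obtain ⟨x, y, hxy⟩ := hnt
        intro h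
        rcases ne_or_eq x 0 with hx | rfl
        · exact hx ((Submodule.mem_bot _).1 (h ▸ Submodule.mem_top (x := x)))
        · exact hxy ((Submodule.mem_bot _).1 (h ▸ Submodule.mem_top (x := y))).symm
      have hcard : Nat.card {l : List (Submodule (ZMod p) V) // MC l ∧ l.length = 1} = 1 := by
        rw [Nat.card_eq_one_iff_unique]
        constructor
        · constructor
          rintro ⟨l, ⟨⟨h1, h2, h3⟩, h4⟩, h5⟩ ⟨l', ⟨⟨h1', h2', h3'⟩, h4'⟩, h5'⟩
          apply Subtype.ext
          obtain ⟨x, rfl⟩ := List.length_eq_one_iff.1 h5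
          obtain ⟨y, rfl⟩ := List.length_eq_one_iff.1 h5'
          simp only [List.getLast?_singleton, Option.some.injEq] at h3 h3'
          subst h3; subst h3'; rfl
        · refine ⟨⟨[⊤], ⟨⟨by simp, List.isChain_singleton _, by simp⟩, ?_⟩, rfl⟩⟩
          simp only [List.head?_cons, ne_eq, Option.some.injEq]
          exact fun h => hbt h.symm
      rw [hcard]
      simp [Finset.powersetCard_zero, Finset.sort_empty, chainProd]
    · -- inductive step, k = m + 1, m ≥ 1
      letI : Fintype (Submodule (ZMod p) V) := Fintype.ofFinite _
      haveI hfinfib : ∀ (W : {W : Submodule (ZMod p) V // ⊥ < W ∧ W < ⊤}),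
          Finite {c : List (Submodule (ZMod p) W.1) // MC c ∧ c.length = m} :=
        fun W => finite_lists _ m
      set g : ℕ → ℕ := fun i =>
        ∑ s' ∈ (Finset.Icc 1 (i - 1)).powersetCard (m - 1),
          chainProd p (s'.sort (· ≤ ·) ++ [i]) with hg
      -- the bijection
      set F : (Σ (W : {W : Submodule (ZMod p) V // ⊥ < W ∧ W < ⊤}),
          {c : List (Submodule (ZMod p) W.1) // MC c ∧ c.length = m}) →
          {l : List (Submodule (ZMod p) V) // MC l ∧ l.length = m + 1} :=
        fun x => ⟨(x.2.1.map (fun U => U.map x.1.1.subtype)) ++ [⊤],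
          ⟨MC_append_top x.1.1 x.1.2.2 x.2.1 x.2.2.1, by simp [x.2.2.2]⟩⟩ with hF
      have hinj : Function.Injective F := by
        rintro ⟨⟨W, hW⟩, ⟨c, hc⟩⟩ ⟨⟨W', hW'⟩, ⟨c', hc'⟩⟩ h
        have hval := congrArg Subtype.val h
        simp only [hF] at hval
        have h1 : c.map (fun U => U.map W.subtype) = c'.map (fun U => U.map W'.subtype) :=
          (List.append_inj' hval rfl).1
        have e1 : (c.map (fun U => U.map W.subtype)).getLast? = some W := by
          rw [List.getLast?_map, hc.1.1.2.2, Option.map_some, Submodule.map_subtype_top]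
        have e2 : (c'.map (fun U => U.map W'.subtype)).getLast? = some W' := by
          rw [List.getLast?_map, hc'.1.1.2.2, Option.map_some, Submodule.map_subtype_top]
        have hWW : W = W' := by
          have := e1.symm.trans (h1 ▸ e2)
          exact (Option.some.injEq _ _ ▸ this).symm ▸ rfl
        subst hWW
        have hcc : c = c' := by
          have hinj2 : Function.Injective (fun U : Submodule (ZMod p) W =>
              U.map W.subtype) :=
            Submodule.map_injective_of_injective Subtype.val_injective
          exact List.map_injective_iff.2 hinj2 h1
        subst hcc
        rfl
      have hsurj : Function.Surjective F := by
        rintro ⟨l, ⟨⟨hne, hch, hlast⟩, hhead⟩, hlen⟩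
        have hlast' : l.getLast hne = ⊤ := by
          have := List.getLast?_eq_getLast hne
          rw [hlast] at this
          exact (Option.some.injEq _ _ ▸ this.symm)
        have hdec : l.dropLast ++ [(⊤ : Submodule (ZMod p) V)] = l := by
          rw [← hlast']
          exact List.dropLast_append_getLast hne
        set l' := l.dropLast with hl'
        have hlen' : l'.length = m := by
          rw [hl', List.length_dropLast, hlen]
          omega
        have hne' : l' ≠ [] := by
          intro hcon
          rw [hcon] at hlen'
          simp at hlen'
          omega
        have hch2 : l'.Chain' (· < ·) ∧ ∀ x ∈ l'.getLast?, ∀ y ∈ [(⊤ : Submodule (ZMod p) V)].head?, x < y := by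
          have := hch
          rw [← hdec] at this; simp only [List.Chain', List.isChain_append] at this
          exact ⟨this.1, this.2.2⟩
        obtain ⟨hch', hlt⟩ := hch2
        set W := l'.getLast hne' with hWdef
        have hWlast : l'.getLast? = some W := List.getLast?_eq_getLast hne'
        have hWtop : W < ⊤ := hlt W (by rw [hWlast]; rfl) ⊤ rfl
        have hhead' : l'.head? ≠ some ⊥ := by
          rw [← hdec, List.head?_append_of_ne_nil _ hne'] at hhead
          exact hhead
        have hmemle : ∀ x ∈ l', x ≤ W := fun x hx =>
          chain_le_getLast l' hch' x hx W hWlast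
        have hWbot : ⊥ < W := by
          obtain ⟨a, t, hat⟩ := List.exists_cons_of_ne_nil hne'
          have ha : a ≤ W := hmemle a (by rw [hat]; exact List.mem_cons_self)
          have hanb : a ≠ ⊥ := by
            intro hcon
            apply hhead'
            rw [hat, List.head?_cons, hcon]
          rw [bot_lt_iff_ne_bot]
          intro hcon
          rw [hcon] at ha
          exact hanb (le_bot_iff.1 ha)
        set c : List (Submodule (ZMod p) W) := l'.map (fun U => U.comap W.subtype) with hc
        have hcmap : c.map (fun U => U.map W.subtype) = l' := by
          rw [hc, List.map_map]
          have : ∀ x ∈ l', ((fun U : Submodule (ZMod p) W => U.map W.subtype) ∘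
              (fun U : Submodule (ZMod p) V => U.comap W.subtype)) x = id x := by
            intro x hx
            simp only [Function.comp_apply, id_eq, Submodule.map_comap_subtype]
            exact inf_eq_right.2 (hmemle x hx)
          rw [List.map_congr_left this, List.map_id]
        have hcne : c ≠ [] := by simpa [hc] using hne'
        have hcch : c.Chain' (· < ·) := by
          have h2 : (c.map (fun U => U.map W.subtype)).Chain' (· < ·) := by
            rw [hcmap]; exact hch'
          simp only [List.Chain', List.isChain_map] at h2
          exact h2.imp (fun a b hab => (eW_lt_iff W).1 hab)
        have hclast : c.getLast? = some ⊤ := by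
          rw [hc, List.getLast?_map, hWlast, Option.map_some, Submodule.comap_subtype_self]
        have hchead : c.head? ≠ some ⊥ := by
          rw [hc, List.head?_map]
          intro hcon
          rcases Option.map_eq_some_iff.1 hcon with ⟨a, ha, hcomap⟩
          have hamem : a ∈ l' := List.mem_of_mem_head? (by rw [ha]; rfl)
          have : a = ⊥ := by
            have := congrArg (fun U : Submodule (ZMod p) W => U.map W.subtype) hcomap
            simp only [Submodule.map_comap_subtype, Submodule.map_bot] at this
            rw [inf_eq_right.2 (hmemle a hamem)] at this
            exact this
          exact hhead' (by rw [ha, this])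
        refine ⟨⟨⟨W, hWbot, hWtop⟩, ⟨c, ⟨⟨hcne, hcch, hclast⟩, hchead⟩, by
          rw [hc, List.length_map, hlen']⟩⟩, ?_⟩
        apply Subtype.ext
        show (c.map (fun U => U.map W.subtype)) ++ [⊤] = l
        rw [hcmap, hdec]
      -- counting
      have hcount : Nat.card {l : List (Submodule (ZMod p) V) // MC l ∧ l.length = m + 1}
          = ∑ W : {W : Submodule (ZMod p) V // ⊥ < W ∧ W < ⊤}, g (finrank (ZMod p) W.1) := by
        rw [← Nat.card_congr (Equiv.ofBijective F ⟨hinj, hsurj⟩), natCard_sigma]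
        refine Finset.sum_congr rfl (fun W _ => ?_)
        have hrk1 : 1 ≤ finrank (ZMod p) W.1 := by
          rcases Nat.eq_zero_or_pos (finrank (ZMod p) W.1) with h0 | h1
          · exfalso
            have : W.1 = ⊥ := Submodule.finrank_eq_zero.1 h0
            exact absurd this (ne_of_gt W.2.1)
          · exact h1
        exact ih hm W.1 hrk1
      have hgauss : ∀ i ∈ Finset.Icc 1 (n - 1),
          Nat.card {W : Submodule (ZMod p) V // finrank (ZMod p) W = i} = gaussBinom p n i := by
        intro i hi
        have h2 := Finset.mem_Icc.1 hi
        have hile : i ≤ n := by omega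
        refine (gauss_eq (Fact.out : p.Prime).two_le ?_).symm
        exact count_dim (p := p) i V hile
      have hsub : ∑ W : {W : Submodule (ZMod p) V // ⊥ < W ∧ W < ⊤}, g (finrank (ZMod p) W.1)
          = ∑ i ∈ Finset.Icc 1 (n - 1), gaussBinom p n i * g i := by
        rw [← Finset.sum_subtype (Finset.univ.filter fun W : Submodule (ZMod p) V => ⊥ < W ∧ W < ⊤)
          (fun x => by simp) (fun W => g (finrank (ZMod p) W))]
        have hmaps : ∀ W ∈ Finset.univ.filter fun W : Submodule (ZMod p) V => ⊥ < W ∧ W < ⊤,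
            finrank (ZMod p) W ∈ Finset.Icc 1 (n - 1) := by
          intro W hW
          rw [Finset.mem_filter] at hW
          obtain ⟨-, hWb, hWt⟩ := hW
          rw [Finset.mem_Icc]
          constructor
          · by_contra hcon
            push_neg at hcon
            have h0 : finrank (ZMod p) W = 0 := by omega
            exact absurd (Submodule.finrank_eq_zero.1 h0) (ne_of_gt hWb)
          · have hle : finrank (ZMod p) W ≤ n := Submodule.finrank_le W
            have hne : finrank (ZMod p) W ≠ n := by
              intro hcon
              exact absurd (Submodule.eq_top_of_finrank_eq hcon) (ne_of_lt hWt)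
            omega
        rw [← Finset.sum_fiberwise_of_maps_to' hmaps (fun i => g i)]
        refine Finset.sum_congr rfl fun i hi => ?_
        rw [Finset.sum_const, smul_eq_mul]
        congr 1
        have hfe : ((Finset.univ.filter fun W : Submodule (ZMod p) V => ⊥ < W ∧ W < ⊤).filter
            fun W : Submodule (ZMod p) V => finrank (ZMod p) W = i) = Finset.univ.filter
            fun W : Submodule (ZMod p) V => finrank (ZMod p) W = i := by
          ext W
          simp only [Finset.mem_filter, Finset.mem_univ, true_and]
          constructor
          · rintro ⟨-, h⟩; exact h
          · intro h
            rw [Finset.mem_Icc] at hi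
            refine ⟨⟨?_, ?_⟩, h⟩
            · rw [bot_lt_iff_ne_bot]
              intro hcon
              rw [hcon, finrank_bot] at h
              omega
            · rw [lt_top_iff_ne_top]
              intro hcon
              rw [hcon, finrank_top] at h
              omega
          ;
        have hcards : (Finset.univ.filter fun W : Submodule (ZMod p) V =>
            finrank (ZMod p) W = i).card
            = Nat.card {W : Submodule (ZMod p) V // finrank (ZMod p) W = i} := by
          rw [Nat.card_eq_fintype_card, Fintype.card_subtype]
        rw [hfe, hcards]
        exact hgauss i hi
      have key : ∀ i ∈ Finset.Icc 1 (n-1), ∀ s' ∈ (Finset.Icc 1 (i-1)).powersetCard (m-1),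
          gaussBinom p n i * chainProd p (s'.sort (· ≤ ·) ++ [i])
            = chainProd p ((insert i s').sort (· ≤ ·) ++ [n]) := by
        intro i hi s' hs'
        have hlt : ∀ x ∈ s', x < i := by
          intro x hx
          have h1 := (Finset.mem_powersetCard.1 hs').1 hx
          have h2 := Finset.mem_Icc.1 h1
          have h3 := Finset.mem_Icc.1 hi
          omega
        rw [sort_insert_max s' i hlt, chainProd_concat]
      have hRHS : ∑ i ∈ Finset.Icc 1 (n-1), gaussBinom p n i * g i
          = ∑ s ∈ (Finset.Icc 1 (n-1)).powersetCard m, chainProd p (s.sort (· ≤ ·) ++ [n]) := by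
        calc ∑ i ∈ Finset.Icc 1 (n-1), gaussBinom p n i * g i
            = ∑ i ∈ Finset.Icc 1 (n-1), ∑ s' ∈ (Finset.Icc 1 (i-1)).powersetCard (m-1),
                chainProd p ((insert i s').sort (· ≤ ·) ++ [n]) := by
              refine Finset.sum_congr rfl fun i hi => ?_
              rw [hg, Finset.mul_sum]
              exact Finset.sum_congr rfl fun s' hs' => key i hi s' hs'
          _ = ∑ x ∈ (Finset.Icc 1 (n-1)).sigma
                (fun i => (Finset.Icc 1 (i-1)).powersetCard (m-1)),
                chainProd p ((insert x.1 x.2).sort (· ≤ ·) ++ [n]) := by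
              rw [Finset.sum_sigma']
          _ = ∑ s ∈ (Finset.Icc 1 (n-1)).powersetCard m,
                chainProd p (s.sort (· ≤ ·) ++ [n]) := by
              refine Finset.sum_nbij' (i := fun x => insert x.1 x.2)
                (j := fun s => if h : s.Nonempty then ⟨s.max' h, s.erase (s.max' h)⟩
                  else ⟨0, ∅⟩) ?_ ?_ ?_ ?_ ?_
              · rintro ⟨i, s'⟩ hx
                dsimp only at hx ⊢
                rw [Finset.mem_sigma] at hx
                obtain ⟨hi, hs'⟩ := hx
                dsimp only at hi hs'
                obtain ⟨hsub', hcard'⟩ := Finset.mem_powersetCard.1 hs'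
                have hlt : ∀ x ∈ s', x < i := by
                  intro x hxx
                  have h2 := Finset.mem_Icc.1 (hsub' hxx)
                  have h3 := Finset.mem_Icc.1 hi
                  omega
                have hnotmem : i ∉ s' := fun hmem => lt_irrefl i (hlt i hmem)
                rw [Finset.mem_powersetCard]
                constructor
                · intro x hxx
                  rcases Finset.mem_insert.1 hxx with rfl | hxs
                  · exact hi
                  · have h2 := Finset.mem_Icc.1 (hsub' hxs)
                    have h3 := Finset.mem_Icc.1 hi
                    rw [Finset.mem_Icc]
                    omega
                · rw [Finset.card_insert_of_notMem hnotmem, hcard']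
                  omega
              · intro s hs
                obtain ⟨hsub', hcard'⟩ := Finset.mem_powersetCard.1 hs
                have hnon : s.Nonempty := Finset.card_pos.1 (by omega)
                rw [dif_pos hnon, Finset.mem_sigma]
                constructor
                · exact hsub' (s.max'_mem hnon)
                · rw [Finset.mem_powersetCard]
                  constructor
                  · intro x hxx
                    dsimp only at hxx ⊢
                    have hxs := Finset.mem_of_mem_erase hxx
                    have hxne := Finset.ne_of_mem_erase hxx
                    have hxle := s.le_max' x hxs
                    have h2 := Finset.mem_Icc.1 (hsub' hxs)
                    rw [Finset.mem_Icc]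
                    omega
                  · dsimp only
                    rw [Finset.card_erase_of_mem (s.max'_mem hnon), hcard']
              · rintro ⟨i, s'⟩ hx
                dsimp only at hx ⊢
                rw [Finset.mem_sigma] at hx
                obtain ⟨hi, hs'⟩ := hx
                dsimp only at hi hs'
                obtain ⟨hsub', hcard'⟩ := Finset.mem_powersetCard.1 hs'
                have hlt : ∀ x ∈ s', x < i := by
                  intro x hxx
                  have h2 := Finset.mem_Icc.1 (hsub' hxx)
                  have h3 := Finset.mem_Icc.1 hi
                  omega
                have hnotmem : i ∉ s' := fun hmem => lt_irrefl i (hlt i hmem)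
                have hnon : (insert i s').Nonempty := Finset.insert_nonempty i s'
                rw [dif_pos hnon]
                have hmax : (insert i s').max' hnon = i := by
                  apply le_antisymm
                  · apply Finset.max'_le
                    intro x hxx
                    rcases Finset.mem_insert.1 hxx with rfl | hxs
                    · rfl
                    · exact le_of_lt (hlt x hxs)
                  · exact Finset.le_max' _ i (Finset.mem_insert_self i s')
                have herase : (insert i s').erase i = s' := Finset.erase_insert hnotmem
                refine Sigma.ext hmax (heq_of_eq ?_)
                show ((insert i s').erase ((insert i s').max' hnon)) = s'
                rw [hmax, herase]
              · intro s hs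
                obtain ⟨hsub', hcard'⟩ := Finset.mem_powersetCard.1 hs
                have hnon : s.Nonempty := Finset.card_pos.1 (by omega)
                rw [dif_pos hnon]
                exact Finset.insert_erase (s.max'_mem hnon)
              · rintro ⟨i, s'⟩ _
                rfl
      rw [hcount, hsub, hRHS]
      congr 1

section Final
variable {p : ℕ} [Fact p.Prime]

lemma hChains_transfer (G : Type u) [CommGroup G] [Finite G]
    [Module (ZMod p) (Additive G)] (k : ℕ) :
    hChainsLen G k
      = Nat.card {l : List (Submodule (ZMod p) (Additive G)) // MC l ∧ l.length = k} := by
  have e : Subgroup G ≃o Submodule (ZMod p) (Additive G) :=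
    (Subgroup.toAddSubgroup).trans (AddSubgroup.toZModSubmodule p)
  have h1 : hChainsLen G k
      = Nat.card {l : List (Subgroup G) // MC l ∧ l.length = k} := by
    rw [hChainsLen, ← Nat.card_coe_set_eq]
    apply Nat.card_congr
    exact Equiv.subtypeEquivRight (fun l => Iff.rfl)
  rw [h1]
  exact card_MC_map e k

end Final
theorem stmt10 (G : Type*) [CommGroup G] [Finite G] (p n : ℕ) (hp : p.Prime)
    (hn : 1 ≤ n) (hcard : Nat.card G = p ^ n) (hel : ∀ g : G, g ^ p = 1) :
    hChainsLen G 1 = 1 ∧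
    ∀ k : ℕ, 2 ≤ k → k ≤ n →
      hChainsLen G k =
        ∑ l ∈ (Finset.Icc 1 (n - 1)).powersetCard (k - 1),
          chainProd p (l.sort (· ≤ ·) ++ [n]) := by
  haveI hpf : Fact p.Prime := ⟨hp⟩
  letI : Module (ZMod p) (Additive G) := AddCommGroup.zmodModule (n := p) (by
    intro x
    apply Additive.toMul.injective
    rw [toMul_nsmul]
    exact hel x.toMul)
  have hcardA : Nat.card (Additive G) = p ^ finrank (ZMod p) (Additive G) :=
    card_module (p := p) (Additive G)
  have hGA : Nat.card (Additive G) = Nat.card G := Nat.card_congr Additive.toMul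
  have hnn : finrank (ZMod p) (Additive G) = n := by
    apply Nat.pow_right_injective hp.two_le
    show p ^ finrank (ZMod p) (Additive G) = p ^ n
    rw [← hcardA, hGA, hcard]
  constructor
  · rw [hChains_transfer (p := p) G 1, chain_count 1 le_rfl (Additive G) (by omega)]
    simp [Finset.sort_empty, chainProd]
  · intro k hk2 hkn
    rw [hChains_transfer (p := p) G k, chain_count k (by omega) (Additive G) (by omega), hnn]
end
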